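/- arXiv:1306.4012 — 4 statements merged into one kernel-verified Lean document; each statement's English description precedes it below -/
import Mathlib

section
/- Conjugacy of hyperbolic Cantor sets: if R, S ∈ 𝒮¹(I₁,…,I_k,L) satisfy R'(x)·S'(x) > 0 for all x ∈ I₁ ∪ ⋯ ∪ I_k, then there exists a homeomorphism ψ : L → L with ψ(C_S) = C_R which maps each n-block of C_S to the corresponding n-block of C_R, i.e., ψ(φ^S(i₁,…,i_m)(L)) = φ^R(i₁,…,i_m)(L) for all m and all (i₁,…,i_m) ∈ {1,…,k}^m. -/
open Set Filter Topology

/-- The composition `φ_{i₁} ∘ ⋯ ∘ φ_{i_m}` of inverse branches along a word. -/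
def compBranch {k : ℕ} (φ : Fin k → ℝ → ℝ) : List (Fin k) → ℝ → ℝ
  | [] => id
  | i :: l => φ i ∘ compBranch φ l

namespace CantorConj

variable {k : ℕ} {lA lB : ℝ} {c d : Fin k → ℝ} {φ : Fin k → ℝ → ℝ}

lemma compBranch_image_cons (φ : Fin k → ℝ → ℝ) (i : Fin k) (l : List (Fin k)) (s : Set ℝ) :
    compBranch φ (i :: l) '' s = φ i '' (compBranch φ l '' s) := by
  show (φ i ∘ compBranch φ l) '' s = _
  exact Set.image_comp _ _ _

lemma compBranch_image_subset
    (hmaps : ∀ i, Set.MapsTo (φ i) (Set.Icc lA lB) (Set.Icc (c i) (d i)))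
    (hsub : ∀ i, Set.Icc (c i) (d i) ⊆ Set.Icc lA lB) :
    ∀ w : List (Fin k), compBranch φ w '' Set.Icc lA lB ⊆ Set.Icc lA lB := by
  intro w
  induction w with
  | nil => simp [compBranch]
  | cons i l ih =>
    rw [compBranch_image_cons]
    rintro x ⟨y, hy, rfl⟩
    exact hsub i (hmaps i (ih hy))

/-- One inverse-branch step applied to a closed subinterval. -/
lemma branch_step
    (hmaps : ∀ i, Set.MapsTo (φ i) (Set.Icc lA lB) (Set.Icc (c i) (d i)))
    (hcontr : ∀ i, ∀ x ∈ Set.Icc lA lB, ∀ y ∈ Set.Icc lA lB, x ≠ y →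
      |φ i x - φ i y| < |x - y|)
    (hmono : ∀ i, StrictMonoOn (φ i) (Set.Icc lA lB) ∨ StrictAntiOn (φ i) (Set.Icc lA lB))
    (i : Fin k) {a b : ℝ} (hab : a ≤ b) (hsubL : Set.Icc a b ⊆ Set.Icc lA lB) :
    ∃ a' b', a' ≤ b' ∧ Set.Icc a' b' ⊆ Set.Icc (c i) (d i) ∧
      φ i '' Set.Icc a b = Set.Icc a' b' ∧ b' - a' ≤ b - a ∧
      ∀ γ t : ℝ, (∀ x ∈ Set.Icc lA lB, ∀ y ∈ Set.Icc lA lB, t ≤ |x - y| →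
          |φ i x - φ i y| ≤ γ * |x - y|) → t ≤ b - a → b' - a' ≤ γ * (b - a) := by
  have haL : a ∈ Set.Icc lA lB := hsubL (Set.left_mem_Icc.2 hab)
  have hbL : b ∈ Set.Icc lA lB := hsubL (Set.right_mem_Icc.2 hab)
  have hlip : ∀ x ∈ Set.Icc lA lB, ∀ y ∈ Set.Icc lA lB, |φ i x - φ i y| ≤ |x - y| := by
    intro x hx y hy
    rcases eq_or_ne x y with rfl | hne
    · simp
    · exact (hcontr i x hx y hy hne).le
  have hcont : ContinuousOn (φ i) (Set.Icc lA lB) := by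
    have : LipschitzOnWith 1 (φ i) (Set.Icc lA lB) := by
      apply LipschitzOnWith.of_dist_le_mul
      intro x hx y hy
      rw [Real.dist_eq, Real.dist_eq, NNReal.coe_one, one_mul]
      exact hlip x hx y hy
    exact this.continuousOn
  have hcont' : ContinuousOn (φ i) (Set.Icc a b) := hcont.mono hsubL
  rcases hmono i with hm | hm
  · refine ⟨φ i a, φ i b, ?_, ?_, ?_, ?_, ?_⟩
    · exact (hm.monotoneOn) haL hbL hab
    · intro y hy
      exact ⟨le_trans (hmaps i haL).1 hy.1, le_trans hy.2 (hmaps i hbL).2⟩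
    · apply Set.Subset.antisymm
      · rintro y ⟨x, hx, rfl⟩
        exact ⟨hm.monotoneOn haL (hsubL hx) hx.1, hm.monotoneOn (hsubL hx) hbL hx.2⟩
      · exact intermediate_value_Icc hab hcont'
    · have h1 := hlip b hbL a haL
      rw [abs_of_nonneg (sub_nonneg.2 (hm.monotoneOn haL hbL hab)),
        abs_of_nonneg (sub_nonneg.2 hab)] at h1
      exact h1
    · intro γ t hγ ht
      have h2 := hγ b hbL a haL (by rw [abs_of_nonneg (sub_nonneg.2 hab)]; exact ht)
      rw [abs_of_nonneg (sub_nonneg.2 (hm.monotoneOn haL hbL hab)),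
        abs_of_nonneg (sub_nonneg.2 hab)] at h2
      exact h2
  · refine ⟨φ i b, φ i a, ?_, ?_, ?_, ?_, ?_⟩
    · exact (hm.antitoneOn) haL hbL hab
    · intro y hy
      exact ⟨le_trans (hmaps i hbL).1 hy.1, le_trans hy.2 (hmaps i haL).2⟩
    · apply Set.Subset.antisymm
      · rintro y ⟨x, hx, rfl⟩
        exact ⟨hm.antitoneOn (hsubL hx) hbL hx.2, hm.antitoneOn haL (hsubL hx) hx.1⟩
      · exact intermediate_value_Icc' hab hcont'
    · have h1 := hlip a haL b hbL
      rw [abs_of_nonneg (sub_nonneg.2 (hm.antitoneOn haL hbL hab)), abs_sub_comm a b,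
        abs_of_nonneg (sub_nonneg.2 hab)] at h1
      exact h1
    · intro γ t hγ ht
      have h2 := hγ a haL b hbL
        (by rw [abs_sub_comm a b, abs_of_nonneg (sub_nonneg.2 hab)]; exact ht)
      rw [abs_of_nonneg (sub_nonneg.2 (hm.antitoneOn haL hbL hab)), abs_sub_comm a b,
        abs_of_nonneg (sub_nonneg.2 hab)] at h2
      exact h2

/-- Uniform contraction modulus: on pairs at distance `≥ t` the branches contract by a
uniform factor `γ < 1`. -/
lemma modulus (hk : 0 < k)
    (hmaps : ∀ i, Set.MapsTo (φ i) (Set.Icc lA lB) (Set.Icc (c i) (d i)))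
    (hsub : ∀ i, Set.Icc (c i) (d i) ⊆ Set.Icc lA lB)
    (hcontr : ∀ i, ∀ x ∈ Set.Icc lA lB, ∀ y ∈ Set.Icc lA lB, x ≠ y →
      |φ i x - φ i y| < |x - y|)
    {t : ℝ} (ht : 0 < t) :
    ∃ γ : ℝ, 0 ≤ γ ∧ γ < 1 ∧ ∀ i, ∀ x ∈ Set.Icc lA lB, ∀ y ∈ Set.Icc lA lB,
      t ≤ |x - y| → |φ i x - φ i y| ≤ γ * |x - y| := by
  classical
  set K : Set (ℝ × ℝ) :=
    (Set.Icc lA lB ×ˢ Set.Icc lA lB) ∩ {p : ℝ × ℝ | t ≤ |p.1 - p.2|} with hK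
  have hKcomp : IsCompact K := by
    apply (isCompact_Icc.prod isCompact_Icc).inter_right
    exact isClosed_le continuous_const ((continuous_fst.sub continuous_snd).abs)
  by_cases hKne : K.Nonempty
  · have hcφ : ∀ i, ContinuousOn (φ i) (Set.Icc lA lB) := by
      intro i
      have : LipschitzOnWith 1 (φ i) (Set.Icc lA lB) := by
        apply LipschitzOnWith.of_dist_le_mul
        intro x hx y hy
        rw [Real.dist_eq, Real.dist_eq, NNReal.coe_one, one_mul]
        rcases eq_or_ne x y with rfl | hne
        · simp
        · exact (hcontr i x hx y hy hne).le
      exact this.continuousOn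
    have key : ∀ i : Fin k, ∃ γi : ℝ, 0 ≤ γi ∧ γi < 1 ∧
        ∀ x ∈ Set.Icc lA lB, ∀ y ∈ Set.Icc lA lB,
          t ≤ |x - y| → |φ i x - φ i y| ≤ γi * |x - y| := by
      intro i
      set g : ℝ × ℝ → ℝ := fun p => |φ i p.1 - φ i p.2| / |p.1 - p.2| with hg
      have hgcont : ContinuousOn g K := by
        apply ContinuousOn.div
        · apply ContinuousOn.abs
          apply ContinuousOn.sub
          · exact (hcφ i).comp continuousOn_fst (fun p hp => hp.1.1)
          · exact (hcφ i).comp continuousOn_snd (fun p hp => hp.1.2)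
        · exact ((continuous_fst.sub continuous_snd).abs).continuousOn
        · intro p hp
          exact ne_of_gt (lt_of_lt_of_le ht hp.2)
      obtain ⟨p₀, hp₀K, hp₀max⟩ := hKcomp.exists_isMaxOn hKne hgcont
      refine ⟨g p₀, ?_, ?_, ?_⟩
      · exact div_nonneg (abs_nonneg _) (abs_nonneg _)
      · have hne : p₀.1 ≠ p₀.2 := by
          intro h
          have := hp₀K.2
          rw [Set.mem_setOf_eq, h, sub_self, abs_zero] at this
          exact absurd (lt_of_lt_of_le ht this) (lt_irrefl 0)
        have := hcontr i p₀.1 hp₀K.1.1 p₀.2 hp₀K.1.2 hne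
        rw [hg]
        rw [div_lt_one (lt_of_lt_of_le ht hp₀K.2)]
        exact this
      · intro x hx y hy hxy
        have hmem : (x, y) ∈ K := ⟨⟨hx, hy⟩, hxy⟩
        have := hp₀max hmem
        have hpos : 0 < |x - y| := lt_of_lt_of_le ht hxy
        rw [← div_le_iff₀ hpos]
        exact this
    choose γf hγ0 hγ1 hγ using key
    have hne : (Finset.univ : Finset (Fin k)).Nonempty := by
      have : Nonempty (Fin k) := Fin.pos_iff_nonempty.mp hk
      exact Finset.univ_nonempty
    refine ⟨Finset.univ.sup' hne γf, ?_, ?_, ?_⟩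
    · obtain ⟨i, _, hi⟩ := Finset.exists_mem_eq_sup' hne γf
      rw [hi]; exact hγ0 i
    · rw [Finset.sup'_lt_iff]
      intro i _
      exact hγ1 i
    · intro i x hx y hy hxy
      refine le_trans (hγ i x hx y hy hxy) ?_
      apply mul_le_mul_of_nonneg_right _ (abs_nonneg _)
      exact Finset.le_sup' γf (Finset.mem_univ i)
  · refine ⟨1/2, by norm_num, by norm_num, ?_⟩
    intro i x hx y hy hxy
    exact absurd ⟨⟨hx, hy⟩, hxy⟩ (fun h => hKne ⟨(x, y), h⟩)

/-- Each block is a closed subinterval of `L`, with a diameter bound. -/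
lemma block_bound (hk : 0 < k) (hAB : lA ≤ lB)
    (hmaps : ∀ i, Set.MapsTo (φ i) (Set.Icc lA lB) (Set.Icc (c i) (d i)))
    (hsub : ∀ i, Set.Icc (c i) (d i) ⊆ Set.Icc lA lB)
    (hcontr : ∀ i, ∀ x ∈ Set.Icc lA lB, ∀ y ∈ Set.Icc lA lB, x ≠ y →
      |φ i x - φ i y| < |x - y|)
    (hmono : ∀ i, StrictMonoOn (φ i) (Set.Icc lA lB) ∨ StrictAntiOn (φ i) (Set.Icc lA lB))
    {ε : ℝ} (hε : 0 < ε) :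
    ∃ γ : ℝ, 0 ≤ γ ∧ γ < 1 ∧ ∀ w : List (Fin k),
      ∃ a b : ℝ, a ≤ b ∧ Set.Icc a b ⊆ Set.Icc lA lB ∧
        compBranch φ w '' Set.Icc lA lB = Set.Icc a b ∧
        b - a ≤ max ε (γ ^ w.length * (lB - lA)) := by
  obtain ⟨γ, hγ0, hγ1, hγ⟩ := modulus hk hmaps hsub hcontr hε
  refine ⟨γ, hγ0, hγ1, ?_⟩
  intro w
  induction w with
  | nil =>
    refine ⟨lA, lB, hAB, Set.Subset.rfl, by simp [compBranch], ?_⟩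
    simp only [List.length_nil, pow_zero, one_mul]
    exact le_max_right _ _
  | cons i l ih =>
    obtain ⟨a, b, hab, hsubL, hblock, hbound⟩ := ih
    obtain ⟨a', b', hab', hsubI, himg, hdiam, hcontrbound⟩ :=
      branch_step hmaps hcontr hmono i hab hsubL
    refine ⟨a', b', hab', le_trans hsubI (hsub i), ?_, ?_⟩
    · rw [compBranch_image_cons, hblock, himg]
    · rcases le_or_gt (b - a) ε with hle | hlt
      · exact le_trans hdiam (le_trans hle (le_max_left _ _))
      · have h1 : b' - a' ≤ γ * (b - a) := hcontrbound γ ε (hγ i) hlt.le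
        have h2 : γ * (b - a) ≤ γ * max ε (γ ^ l.length * (lB - lA)) :=
          mul_le_mul_of_nonneg_left hbound hγ0
        rcases max_cases ε (γ ^ l.length * (lB - lA)) with ⟨hm, _⟩ | ⟨hm, _⟩
        · rw [hm] at h2
          refine le_trans h1 (le_trans h2 ?_)
          refine le_trans ?_ (le_max_left ε _)
          nlinarith
        · rw [hm] at h2
          refine le_trans h1 (le_trans h2 ?_)
          refine le_trans ?_ (le_max_right ε _)
          rw [List.length_cons, pow_succ, mul_comm (γ ^ l.length) γ, mul_assoc]

/-- For any `ε > 0` there is a level `m` at which all blocks have diameter `≤ ε`. -/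
lemma diam_block (hk : 0 < k) (hAB : lA ≤ lB)
    (hmaps : ∀ i, Set.MapsTo (φ i) (Set.Icc lA lB) (Set.Icc (c i) (d i)))
    (hsub : ∀ i, Set.Icc (c i) (d i) ⊆ Set.Icc lA lB)
    (hcontr : ∀ i, ∀ x ∈ Set.Icc lA lB, ∀ y ∈ Set.Icc lA lB, x ≠ y →
      |φ i x - φ i y| < |x - y|)
    (hmono : ∀ i, StrictMonoOn (φ i) (Set.Icc lA lB) ∨ StrictAntiOn (φ i) (Set.Icc lA lB))
    {ε : ℝ} (hε : 0 < ε) :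
    ∃ m : ℕ, ∀ w : List (Fin k), w.length = m →
      ∀ x ∈ compBranch φ w '' Set.Icc lA lB, ∀ y ∈ compBranch φ w '' Set.Icc lA lB,
        |x - y| ≤ ε := by
  obtain ⟨γ, hγ0, hγ1, hγ⟩ := block_bound hk hAB hmaps hsub hcontr hmono hε
  have htend : Tendsto (fun m : ℕ => γ ^ m * (lB - lA)) atTop (𝓝 (0 * (lB - lA))) :=
    (tendsto_pow_atTop_nhds_zero_of_lt_one hγ0 hγ1).mul_const _
  rw [zero_mul] at htend
  have hev : ∀ᶠ m : ℕ in atTop, γ ^ m * (lB - lA) < ε := by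
    exact htend.eventually_lt_const hε
  obtain ⟨m, hm⟩ := hev.exists
  refine ⟨m, ?_⟩
  intro w hw x hx y hy
  obtain ⟨a, b, hab, _, hblock, hbound⟩ := hγ w
  rw [hblock] at hx hy
  rw [hw] at hbound
  have hbd : b - a ≤ ε := by
    rcases max_cases ε (γ ^ m * (lB - lA)) with ⟨hmx, _⟩ | ⟨hmx, _⟩
    · rwa [hmx] at hbound
    · rw [hmx] at hbound; linarith
  rw [abs_sub_le_iff]
  constructor <;> [skip; skip] <;> [linarith [hx.1, hx.2, hy.1, hy.2]; linarith [hx.1, hx.2, hy.1, hy.2]]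

/-- Plain version: each block is a closed subinterval. -/
lemma block_isIcc (hk : 0 < k) (hAB : lA ≤ lB)
    (hmaps : ∀ i, Set.MapsTo (φ i) (Set.Icc lA lB) (Set.Icc (c i) (d i)))
    (hsub : ∀ i, Set.Icc (c i) (d i) ⊆ Set.Icc lA lB)
    (hcontr : ∀ i, ∀ x ∈ Set.Icc lA lB, ∀ y ∈ Set.Icc lA lB, x ≠ y →
      |φ i x - φ i y| < |x - y|)
    (hmono : ∀ i, StrictMonoOn (φ i) (Set.Icc lA lB) ∨ StrictAntiOn (φ i) (Set.Icc lA lB))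
    (w : List (Fin k)) :
    ∃ a b : ℝ, compBranch φ w '' Set.Icc lA lB = Set.Icc a b := by
  obtain ⟨γ, _, _, hγ⟩ := block_bound (ε := 1) hk hAB hmaps hsub hcontr hmono one_pos
  obtain ⟨a, b, _, _, hblock, _⟩ := hγ w
  exact ⟨a, b, hblock⟩

/-! ### The approximating conjugacies -/

noncomputable def PsiAux (c d : Fin k → ℝ) (T : ℝ → ℝ) (φ : Fin k → ℝ → ℝ) : ℕ → ℝ → ℝ
  | 0 => id
  | m + 1 => fun x =>
      if h : ∃ j, x ∈ Set.Icc (c j) (d j) then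
        φ h.choose (PsiAux c d T φ m (T x))
      else x

variable {T T₂ : ℝ → ℝ} {φ₂ : Fin k → ℝ → ℝ}

lemma psiAux_zero (T : ℝ → ℝ) (φ : Fin k → ℝ → ℝ) (x : ℝ) : PsiAux c d T φ 0 x = x := rfl

lemma psiAux_of_notMem {x : ℝ} (hx : ∀ j, x ∉ Set.Icc (c j) (d j)) (m : ℕ) :
    PsiAux c d T φ m x = x := by
  cases m with
  | zero => rfl
  | succ m =>
    show dite _ _ _ = x
    rw [dif_neg]
    rintro ⟨j, hj⟩
    exact hx j hj

lemma psiAux_of_mem (hu : ∀ ⦃i j : Fin k⦄ {x : ℝ}, x ∈ Set.Icc (c i) (d i) →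
      x ∈ Set.Icc (c j) (d j) → i = j)
    {x : ℝ} {j : Fin k} (hx : x ∈ Set.Icc (c j) (d j)) (m : ℕ) :
    PsiAux c d T φ (m + 1) x = φ j (PsiAux c d T φ m (T x)) := by
  show dite _ _ _ = _
  have h : ∃ i, x ∈ Set.Icc (c i) (d i) := ⟨j, hx⟩
  rw [dif_pos h, hu h.choose_spec hx]

lemma psiAux_mapsTo
    (hmaps : ∀ i, Set.MapsTo (φ i) (Set.Icc lA lB) (Set.Icc (c i) (d i)))
    (hsub : ∀ i, Set.Icc (c i) (d i) ⊆ Set.Icc lA lB)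
    (hmapsT : ∀ i, Set.MapsTo T (Set.Icc (c i) (d i)) (Set.Icc lA lB)) :
    ∀ m, Set.MapsTo (PsiAux c d T φ m) (Set.Icc lA lB) (Set.Icc lA lB) := by
  intro m
  induction m with
  | zero => exact fun x hx => hx
  | succ m ih =>
    intro x hx
    show dite _ _ _ ∈ _
    split_ifs with h
    · exact hsub _ (hmaps _ (ih (hmapsT _ h.choose_spec)))
    · exact hx

/-- `PsiAux m` carries `φ₁`-blocks of length `≤ m` to the corresponding `φ₂`-blocks. -/
lemma psiAux_mem_block
    (hu : ∀ ⦃i j : Fin k⦄ {x : ℝ}, x ∈ Set.Icc (c i) (d i) →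
      x ∈ Set.Icc (c j) (d j) → i = j)
    {φ₁ : Fin k → ℝ → ℝ}
    (hmaps₁ : ∀ i, Set.MapsTo (φ₁ i) (Set.Icc lA lB) (Set.Icc (c i) (d i)))
    (hmaps₂ : ∀ i, Set.MapsTo (φ₂ i) (Set.Icc lA lB) (Set.Icc (c i) (d i)))
    (hsub : ∀ i, Set.Icc (c i) (d i) ⊆ Set.Icc lA lB)
    (hmapsT : ∀ i, Set.MapsTo T (Set.Icc (c i) (d i)) (Set.Icc lA lB))
    (hTφ₁ : ∀ i, ∀ x ∈ Set.Icc lA lB, T (φ₁ i x) = x) :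
    ∀ (w : List (Fin k)) (m : ℕ), w.length ≤ m → ∀ x ∈ compBranch φ₁ w '' Set.Icc lA lB,
      PsiAux c d T φ₂ m x ∈ compBranch φ₂ w '' Set.Icc lA lB := by
  intro w
  induction w with
  | nil =>
    intro m _ x hx
    simp only [compBranch, Set.image_id] at hx ⊢
    exact psiAux_mapsTo hmaps₂ hsub hmapsT m hx
  | cons i l ih =>
    intro m hm x hx
    rw [compBranch_image_cons] at hx
    obtain ⟨z, hz, rfl⟩ := hx
    have hzL : z ∈ Set.Icc lA lB := compBranch_image_subset hmaps₁ hsub l hz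
    have hxI : φ₁ i z ∈ Set.Icc (c i) (d i) := hmaps₁ i hzL
    obtain ⟨m', rfl⟩ : ∃ m', m = m' + 1 := by
      cases m with
      | zero => simp at hm
      | succ m' => exact ⟨m', rfl⟩
    rw [psiAux_of_mem hu hxI m', hTφ₁ i z hzL]
    rw [compBranch_image_cons]
    exact Set.mem_image_of_mem _ (ih m' (Nat.succ_le_succ_iff.mp hm) z hz)

/-- If `x` is in no block of length `m`, then `PsiAux` has stabilised at time `m`. -/
lemma psiAux_stab
    (hu : ∀ ⦃i j : Fin k⦄ {x : ℝ}, x ∈ Set.Icc (c i) (d i) →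
      x ∈ Set.Icc (c j) (d j) → i = j)
    {φ₁ : Fin k → ℝ → ℝ}
    (hφ₁T : ∀ i, ∀ x ∈ Set.Icc (c i) (d i), φ₁ i (T x) = x)
    (hmapsT : ∀ i, Set.MapsTo T (Set.Icc (c i) (d i)) (Set.Icc lA lB)) :
    ∀ (m : ℕ) (x : ℝ), x ∈ Set.Icc lA lB →
      (∀ w : List (Fin k), w.length = m → x ∉ compBranch φ₁ w '' Set.Icc lA lB) →
      ∀ m' : ℕ, m ≤ m' → PsiAux c d T φ₂ m' x = PsiAux c d T φ₂ m x := by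
  intro m
  induction m with
  | zero =>
    intro x hx hblock
    exact absurd (by simpa [compBranch] using hx) (hblock [] rfl)
  | succ m ih =>
    intro x hx hblock m' hm'
    by_cases hmem : ∃ j, x ∈ Set.Icc (c j) (d j)
    · obtain ⟨j, hj⟩ := hmem
      have hTx : ∀ w : List (Fin k), w.length = m →
          T x ∉ compBranch φ₁ w '' Set.Icc lA lB := by
        intro w hw hTxw
        apply hblock (j :: w) (by simp [hw])
        rw [compBranch_image_cons]
        rw [← hφ₁T j x hj]
        exact Set.mem_image_of_mem _ hTxw
      obtain ⟨n, rfl⟩ : ∃ n, m' = n + 1 := by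
        cases m' with
        | zero => omega
        | succ n => exact ⟨n, rfl⟩
      rw [psiAux_of_mem hu hj n, psiAux_of_mem hu hj m]
      rw [ih (T x) (hmapsT j hj) hTx n (by omega)]
    · push_neg at hmem
      rw [psiAux_of_notMem hmem, psiAux_of_notMem hmem]

/-- The two approximating sequences are inverse to each other at every stage. -/
lemma psiAux_inverse
    (hu : ∀ ⦃i j : Fin k⦄ {x : ℝ}, x ∈ Set.Icc (c i) (d i) →
      x ∈ Set.Icc (c j) (d j) → i = j)
    {φ₁ : Fin k → ℝ → ℝ}
    (hmaps₁ : ∀ i, Set.MapsTo (φ₁ i) (Set.Icc lA lB) (Set.Icc (c i) (d i)))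
    (hmaps₂ : ∀ i, Set.MapsTo (φ₂ i) (Set.Icc lA lB) (Set.Icc (c i) (d i)))
    (hsub : ∀ i, Set.Icc (c i) (d i) ⊆ Set.Icc lA lB)
    (hmapsT : ∀ i, Set.MapsTo T (Set.Icc (c i) (d i)) (Set.Icc lA lB))
    (hmapsT₂ : ∀ i, Set.MapsTo T₂ (Set.Icc (c i) (d i)) (Set.Icc lA lB))
    (hφ₁T : ∀ i, ∀ x ∈ Set.Icc (c i) (d i), φ₁ i (T x) = x)
    (hT₂φ₂ : ∀ i, ∀ x ∈ Set.Icc lA lB, T₂ (φ₂ i x) = x) :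
    ∀ (m : ℕ), ∀ x ∈ Set.Icc lA lB,
      PsiAux c d T₂ φ₁ m (PsiAux c d T φ₂ m x) = x := by
  intro m
  induction m with
  | zero => intro x _; rfl
  | succ m ih =>
    intro x hx
    by_cases hmem : ∃ j, x ∈ Set.Icc (c j) (d j)
    · obtain ⟨j, hj⟩ := hmem
      have hTxL : T x ∈ Set.Icc lA lB := hmapsT j hj
      have hPsiL : PsiAux c d T φ₂ m (T x) ∈ Set.Icc lA lB :=
        psiAux_mapsTo hmaps₂ hsub hmapsT m hTxL
      have hu' : φ₂ j (PsiAux c d T φ₂ m (T x)) ∈ Set.Icc (c j) (d j) := hmaps₂ j hPsiL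
      rw [psiAux_of_mem hu hj m, psiAux_of_mem hu hu' m, hT₂φ₂ j _ hPsiL,
        ih (T x) hTxL, hφ₁T j x hj]
    · push_neg at hmem
      rw [psiAux_of_notMem hmem, psiAux_of_notMem hmem]

/-- Strict monotonicity of the approximating maps. -/
lemma psiAux_strictMono
    (hu : ∀ ⦃i j : Fin k⦄ {x : ℝ}, x ∈ Set.Icc (c i) (d i) →
      x ∈ Set.Icc (c j) (d j) → i = j)
    (hcd : ∀ j, c j ≤ d j)
    (hdisj : ∀ i j, i ≠ j → Disjoint (Set.Icc (c i) (d i)) (Set.Icc (c j) (d j)))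
    (hmaps : ∀ i, Set.MapsTo (φ₂ i) (Set.Icc lA lB) (Set.Icc (c i) (d i)))
    (hsub : ∀ i, Set.Icc (c i) (d i) ⊆ Set.Icc lA lB)
    (hmapsT : ∀ i, Set.MapsTo T (Set.Icc (c i) (d i)) (Set.Icc lA lB))
    (hcross : ∀ j, (StrictMonoOn T (Set.Icc (c j) (d j)) ∧
        StrictMonoOn (φ₂ j) (Set.Icc lA lB)) ∨
      (StrictAntiOn T (Set.Icc (c j) (d j)) ∧ StrictAntiOn (φ₂ j) (Set.Icc lA lB))) :
    ∀ m, StrictMonoOn (PsiAux c d T φ₂ m) (Set.Icc lA lB) := by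
  intro m
  induction m with
  | zero => exact fun x _ y _ h => h
  | succ m ih =>
    intro x hxL y hyL hxy
    have hIub : ∀ {i : Fin k} {z : ℝ}, z ∈ Set.Icc lA lB →
        PsiAux c d T φ₂ (m + 1) z ∈ Set.Icc (c i) (d i) ∨ True := fun _ => Or.inr trivial
    by_cases hx : ∃ i, x ∈ Set.Icc (c i) (d i) <;>
      by_cases hy : ∃ j, y ∈ Set.Icc (c j) (d j)
    · obtain ⟨i, hxi⟩ := hx
      obtain ⟨j, hyj⟩ := hy
      rcases eq_or_ne i j with rfl | hij
      · -- same interval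
        rw [psiAux_of_mem hu hxi m, psiAux_of_mem hu hyj m]
        have hTxL : T x ∈ Set.Icc lA lB := hmapsT i hxi
        have hTyL : T y ∈ Set.Icc lA lB := hmapsT i hyj
        rcases hcross i with ⟨hT, hφ⟩ | ⟨hT, hφ⟩
        · exact hφ (psiAux_mapsTo hmaps hsub hmapsT m hTxL)
            (psiAux_mapsTo hmaps hsub hmapsT m hTyL)
            (ih hTxL hTyL (hT hxi hyj hxy))
        · exact hφ (psiAux_mapsTo hmaps hsub hmapsT m hTyL)
            (psiAux_mapsTo hmaps hsub hmapsT m hTxL)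
            (ih hTyL hTxL (hT hxi hyj hxy))
      · -- different intervals: `I i` lies entirely to the left of `I j`
        have hdi : d i < c j := by
          by_contra hcon
          push_neg at hcon
          have : Set.Nonempty (Set.Icc (c i) (d i) ∩ Set.Icc (c j) (d j)) := by
            refine ⟨max (c i) (c j), ?_, ?_⟩
            · exact ⟨le_max_left _ _, max_le (hcd i) hcon⟩
            · refine ⟨le_max_right _ _, max_le ?_ (hcd j)⟩
              exact le_trans hxi.1 (le_trans hxy.le hyj.2)
          exact absurd ((hdisj i j hij).inter_eq) this.ne_empty
        have h1 : PsiAux c d T φ₂ (m + 1) x ≤ d i := by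
          rw [psiAux_of_mem hu hxi m]
          exact (hmaps i (psiAux_mapsTo hmaps hsub hmapsT m (hmapsT i hxi))).2
        have h2 : c j ≤ PsiAux c d T φ₂ (m + 1) y := by
          rw [psiAux_of_mem hu hyj m]
          exact (hmaps j (psiAux_mapsTo hmaps hsub hmapsT m (hmapsT j hyj))).1
        linarith
    · obtain ⟨i, hxi⟩ := hx
      push_neg at hy
      have hyd : d i < y := by
        by_contra hcon
        push_neg at hcon
        exact hy i ⟨le_trans hxi.1 hxy.le, hcon⟩
      have h1 : PsiAux c d T φ₂ (m + 1) x ≤ d i := by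
        rw [psiAux_of_mem hu hxi m]
        exact (hmaps i (psiAux_mapsTo hmaps hsub hmapsT m (hmapsT i hxi))).2
      rw [psiAux_of_notMem hy]
      linarith
    · obtain ⟨j, hyj⟩ := hy
      push_neg at hx
      have hxc : x < c j := by
        by_contra hcon
        push_neg at hcon
        exact hx j ⟨hcon, le_trans hxy.le hyj.2⟩
      have h2 : c j ≤ PsiAux c d T φ₂ (m + 1) y := by
        rw [psiAux_of_mem hu hyj m]
        exact (hmaps j (psiAux_mapsTo hmaps hsub hmapsT m (hmapsT j hyj))).1
      rw [psiAux_of_notMem hx]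
      linarith
    · push_neg at hx hy
      rw [psiAux_of_notMem hx, psiAux_of_notMem hy]
      exact hxy

/-! ### Analytic lemmas -/

lemma expand_of_deriv {T T' : ℝ → ℝ} {a b : ℝ}
    (hder : ∀ x ∈ Set.Icc a b, HasDerivAt T (T' x) x)
    (hexp : ∀ x ∈ Set.Icc a b, 1 < |T' x|) :
    ∀ x ∈ Set.Icc a b, ∀ y ∈ Set.Icc a b, x < y → y - x < |T y - T x| := by
  intro x hx y hy hxy
  have hsub : Set.Icc x y ⊆ Set.Icc a b := Set.Icc_subset_Icc hx.1 hy.2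
  have hcont : ContinuousOn T (Set.Icc x y) := fun z hz =>
    ((hder z (hsub hz)).continuousAt).continuousWithinAt
  obtain ⟨z, hz, hslope⟩ := exists_hasDerivAt_eq_slope T T' hxy hcont
    (fun z hz => hder z (hsub (Set.Ioo_subset_Icc_self hz)))
  have hz' : 1 < |T' z| := hexp z (hsub (Set.Ioo_subset_Icc_self hz))
  have hyx : (0:ℝ) < y - x := sub_pos.2 hxy
  have : T y - T x = T' z * (y - x) := by
    rw [hslope]; field_simp
  rw [this, abs_mul, abs_of_pos hyx]
  nlinarith [abs_nonneg (T' z)]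

lemma expand_abs_of_deriv {T T' : ℝ → ℝ} {a b : ℝ}
    (hder : ∀ x ∈ Set.Icc a b, HasDerivAt T (T' x) x)
    (hexp : ∀ x ∈ Set.Icc a b, 1 < |T' x|) :
    ∀ x ∈ Set.Icc a b, ∀ y ∈ Set.Icc a b, x ≠ y → |x - y| < |T x - T y| := by
  intro x hx y hy hne
  rcases lt_or_gt_of_ne hne with h | h
  · rw [abs_sub_comm x y, abs_sub_comm (T x) (T y),
      abs_of_pos (sub_pos.2 h)]
    exact expand_of_deriv hder hexp x hx y hy h
  · rw [abs_of_pos (sub_pos.2 h)]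
    exact expand_of_deriv hder hexp y hy x hx h

lemma deriv_nonneg_of_strictMonoOn {T T' : ℝ → ℝ} {a b : ℝ} (hab : a < b)
    (hder : HasDerivAt T (T' a) a) (hm : StrictMonoOn T (Set.Icc a b)) :
    0 ≤ T' a := by
  have htend : Tendsto (slope T a) (𝓝[>] a) (𝓝 (T' a)) :=
    (hasDerivAt_iff_tendsto_slope.mp hder).mono_left
      (nhdsWithin_mono _ (fun x hx => ne_of_gt hx))
  refine ge_of_tendsto htend ?_
  filter_upwards [Ioc_mem_nhdsGT_of_mem ⟨le_refl a, hab⟩] with x hx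
  have hTa : T a < T x := hm (Set.left_mem_Icc.2 hab.le) ⟨hx.1.le, hx.2⟩ hx.1
  rw [slope_def_field]
  exact div_nonneg (sub_nonneg.2 hTa.le) (sub_nonneg.2 hx.1.le)

lemma deriv_nonpos_of_strictAntiOn {T T' : ℝ → ℝ} {a b : ℝ} (hab : a < b)
    (hder : HasDerivAt T (T' a) a) (hm : StrictAntiOn T (Set.Icc a b)) :
    T' a ≤ 0 := by
  have htend : Tendsto (slope T a) (𝓝[>] a) (𝓝 (T' a)) :=
    (hasDerivAt_iff_tendsto_slope.mp hder).mono_left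
      (nhdsWithin_mono _ (fun x hx => ne_of_gt hx))
  refine le_of_tendsto htend ?_
  filter_upwards [Ioc_mem_nhdsGT_of_mem ⟨le_refl a, hab⟩] with x hx
  have hTa : T x < T a := hm (Set.left_mem_Icc.2 hab.le) ⟨hx.1.le, hx.2⟩ hx.1
  rw [slope_def_field]
  exact div_nonpos_of_nonpos_of_nonneg (sub_nonpos.2 hTa.le) (sub_nonneg.2 hx.1.le)

lemma branch_strictMonoOn {T : ℝ → ℝ} {φi : ℝ → ℝ} {ci di : ℝ}
    (hmaps : Set.MapsTo φi (Set.Icc lA lB) (Set.Icc ci di))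
    (hTφ : ∀ x ∈ Set.Icc lA lB, T (φi x) = x)
    (hm : StrictMonoOn T (Set.Icc ci di)) :
    StrictMonoOn φi (Set.Icc lA lB) := by
  intro x hx y hy hxy
  rcases lt_trichotomy (φi x) (φi y) with h | h | h
  · exact h
  · exact absurd (by rw [← hTφ x hx, ← hTφ y hy, h]) hxy.ne
  · have := hm (hmaps hy) (hmaps hx) h
    rw [hTφ x hx, hTφ y hy] at this
    exact absurd this (not_lt.2 hxy.le)

lemma branch_strictAntiOn {T : ℝ → ℝ} {φi : ℝ → ℝ} {ci di : ℝ}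
    (hmaps : Set.MapsTo φi (Set.Icc lA lB) (Set.Icc ci di))
    (hTφ : ∀ x ∈ Set.Icc lA lB, T (φi x) = x)
    (hm : StrictAntiOn T (Set.Icc ci di)) :
    StrictAntiOn φi (Set.Icc lA lB) := by
  intro x hx y hy hxy
  rcases lt_trichotomy (φi y) (φi x) with h | h | h
  · exact h
  · exact absurd (by rw [← hTφ x hx, ← hTφ y hy, h]) hxy.ne'
  · have := hm (hmaps hx) (hmaps hy) h
    rw [hTφ x hx, hTφ y hy] at this
    exact absurd this (not_lt.2 hxy.le)

/-! ### Characterisation of the Cantor set via blocks -/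

lemma cantor_iff {T : ℝ → ℝ}
    (hsub : ∀ i, Set.Icc (c i) (d i) ⊆ Set.Icc lA lB)
    (hmaps : ∀ i, Set.MapsTo (φ i) (Set.Icc lA lB) (Set.Icc (c i) (d i)))
    (hTφ : ∀ i, ∀ x ∈ Set.Icc lA lB, T (φ i x) = x)
    (hφT : ∀ i, ∀ x ∈ Set.Icc (c i) (d i), φ i (T x) = x)
    (x : ℝ) :
    (∀ n : ℕ, T^[n] x ∈ ⋃ j, Set.Icc (c j) (d j)) ↔
      ∀ m : ℕ, ∃ w : List (Fin k), w.length = m ∧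
        x ∈ compBranch φ w '' Set.Icc lA lB := by
  constructor
  · intro h
    have aux : ∀ (m : ℕ) (z : ℝ), (∀ n : ℕ, T^[n] z ∈ ⋃ j, Set.Icc (c j) (d j)) →
        ∃ w : List (Fin k), w.length = m ∧ z ∈ compBranch φ w '' Set.Icc lA lB := by
      intro m
      induction m with
      | zero =>
        intro z hz
        refine ⟨[], rfl, ?_⟩
        simp only [compBranch, Set.image_id]
        have := hz 0
        rw [Function.iterate_zero_apply] at this
        obtain ⟨s, ⟨j, rfl⟩, hj⟩ := this
        exact hsub j hj
      | succ m ih =>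
        intro z hz
        have h0 := hz 0
        rw [Function.iterate_zero_apply] at h0
        obtain ⟨s, ⟨j, rfl⟩, hj⟩ := h0
        have hTz : ∀ n : ℕ, T^[n] (T z) ∈ ⋃ i, Set.Icc (c i) (d i) := by
          intro n
          rw [← Function.iterate_succ_apply]
          exact hz (n + 1)
        obtain ⟨w, hw, hTzw⟩ := ih (T z) hTz
        refine ⟨j :: w, by simp [hw], ?_⟩
        rw [compBranch_image_cons, ← hφT j z hj]
        exact Set.mem_image_of_mem _ hTzw
    exact fun m => aux m x h
  · intro h n
    have aux : ∀ (w : List (Fin k)) (z : ℝ), z ∈ compBranch φ w '' Set.Icc lA lB →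
        ∀ n : ℕ, n < w.length → T^[n] z ∈ ⋃ j, Set.Icc (c j) (d j) := by
      intro w
      induction w with
      | nil => intro z _ n hn; simp at hn
      | cons i l ih =>
        intro z hz n hn
        rw [compBranch_image_cons] at hz
        obtain ⟨u, hu, rfl⟩ := hz
        have huL : u ∈ Set.Icc lA lB := compBranch_image_subset hmaps hsub l hu
        cases n with
        | zero =>
          rw [Function.iterate_zero_apply]
          exact Set.mem_iUnion.2 ⟨i, hmaps i huL⟩
        | succ n =>
          rw [Function.iterate_succ_apply, hTφ i u huL]
          exact ih u hu n (by simpa using hn)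
    obtain ⟨w, hw, hxw⟩ := h (n + 1)
    exact aux w x hxw n (by omega)

end CantorConj
/-- Conjugacy of hyperbolic Cantor sets (Lemma 1): if `R, S ∈ 𝒮¹(I₁,…,I_k,L)` satisfy
`R'(x)·S'(x) > 0` on `∪ I_j`, then there is a homeomorphism `ψ : L → L` with
`ψ(C_S) = C_R` mapping each `m`-block of `C_S` to the corresponding `m`-block of `C_R`. -/
theorem conjugacy_of_hyperbolic_cantor_sets
    (k : ℕ) (hk : 2 ≤ k) (lA lB : ℝ) (hL : lA < lB)
    (c d : Fin k → ℝ) (hcd : ∀ j, c j < d j)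
    (hsub : ∀ j, Set.Icc (c j) (d j) ⊆ Set.Icc lA lB)
    (hdisj : ∀ i j, i ≠ j → Disjoint (Set.Icc (c i) (d i)) (Set.Icc (c j) (d j)))
    (S R S' R' : ℝ → ℝ)
    (hSderiv : ∀ x ∈ ⋃ j, Set.Icc (c j) (d j), HasDerivAt S (S' x) x)
    (hRderiv : ∀ x ∈ ⋃ j, Set.Icc (c j) (d j), HasDerivAt R (R' x) x)
    (hSexp : ∀ x ∈ ⋃ j, Set.Icc (c j) (d j), 1 < |S' x|)
    (hRexp : ∀ x ∈ ⋃ j, Set.Icc (c j) (d j), 1 < |R' x|)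
    (hSsurj : ∀ j, S '' Set.Icc (c j) (d j) = Set.Icc lA lB)
    (hRsurj : ∀ j, R '' Set.Icc (c j) (d j) = Set.Icc lA lB)
    (hsign : ∀ x ∈ ⋃ j, Set.Icc (c j) (d j), 0 < R' x * S' x)
    (φS φR : Fin k → ℝ → ℝ)
    (hφS : ∀ i, ∀ x ∈ Set.Icc lA lB, φS i x ∈ Set.Icc (c i) (d i) ∧ S (φS i x) = x)
    (hφR : ∀ i, ∀ x ∈ Set.Icc lA lB, φR i x ∈ Set.Icc (c i) (d i) ∧ R (φR i x) = x) :
    ∃ ψ : ℝ → ℝ, ContinuousOn ψ (Set.Icc lA lB) ∧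
      Set.BijOn ψ (Set.Icc lA lB) (Set.Icc lA lB) ∧
      ψ '' {x | ∀ n : ℕ, S^[n] x ∈ ⋃ j, Set.Icc (c j) (d j)} =
        {x | ∀ n : ℕ, R^[n] x ∈ ⋃ j, Set.Icc (c j) (d j)} ∧
      ∀ w : List (Fin k),
        ψ '' (compBranch φS w '' Set.Icc lA lB) = compBranch φR w '' Set.Icc lA lB := by
  classical
  open CantorConj in
  have hk0 : 0 < k := by omega
  have hAB : lA ≤ lB := hL.le
  have hcd' : ∀ j, c j ≤ d j := fun j => (hcd j).le
  -- uniqueness of the interval containing a point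
  have hu : ∀ ⦃i j : Fin k⦄ {x : ℝ}, x ∈ Set.Icc (c i) (d i) →
      x ∈ Set.Icc (c j) (d j) → i = j := by
    intro i j x hxi hxj
    by_contra hne
    exact (hdisj i j hne).ne_of_mem hxi hxj rfl
  have hmemU : ∀ (j : Fin k) {x : ℝ}, x ∈ Set.Icc (c j) (d j) →
      x ∈ ⋃ i, Set.Icc (c i) (d i) := fun j {x} hx => Set.mem_iUnion.2 ⟨j, hx⟩
  -- derivative facts restricted to each interval
  have hSd : ∀ j, ∀ x ∈ Set.Icc (c j) (d j), HasDerivAt S (S' x) x :=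
    fun j x hx => hSderiv x (hmemU j hx)
  have hRd : ∀ j, ∀ x ∈ Set.Icc (c j) (d j), HasDerivAt R (R' x) x :=
    fun j x hx => hRderiv x (hmemU j hx)
  -- expansion
  have hexpS : ∀ j, ∀ x ∈ Set.Icc (c j) (d j), ∀ y ∈ Set.Icc (c j) (d j), x ≠ y →
      |x - y| < |S x - S y| :=
    fun j => CantorConj.expand_abs_of_deriv (hSd j) (fun x hx => hSexp x (hmemU j hx))
  have hexpR : ∀ j, ∀ x ∈ Set.Icc (c j) (d j), ∀ y ∈ Set.Icc (c j) (d j), x ≠ y →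
      |x - y| < |R x - R y| :=
    fun j => CantorConj.expand_abs_of_deriv (hRd j) (fun x hx => hRexp x (hmemU j hx))
  -- S, R map each I_j into L
  have hSmapsT : ∀ j, Set.MapsTo S (Set.Icc (c j) (d j)) (Set.Icc lA lB) :=
    fun j x hx => (hSsurj j) ▸ Set.mem_image_of_mem S hx
  have hRmapsT : ∀ j, Set.MapsTo R (Set.Icc (c j) (d j)) (Set.Icc lA lB) :=
    fun j x hx => (hRsurj j) ▸ Set.mem_image_of_mem R hx
  -- injectivity on each I_j
  have hinjS : ∀ j, Set.InjOn S (Set.Icc (c j) (d j)) := by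
    intro j x hx y hy heq
    by_contra hne
    have := hexpS j x hx y hy hne
    rw [heq, sub_self, abs_zero] at this
    exact absurd this (not_lt.2 (abs_nonneg _))
  have hinjR : ∀ j, Set.InjOn R (Set.Icc (c j) (d j)) := by
    intro j x hx y hy heq
    by_contra hne
    have := hexpR j x hx y hy hne
    rw [heq, sub_self, abs_zero] at this
    exact absurd this (not_lt.2 (abs_nonneg _))
  -- continuity on each I_j
  have hcontS : ∀ j, ContinuousOn S (Set.Icc (c j) (d j)) :=
    fun j x hx => (hSd j x hx).continuousAt.continuousWithinAt
  have hcontR : ∀ j, ContinuousOn R (Set.Icc (c j) (d j)) :=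
    fun j x hx => (hRd j x hx).continuousAt.continuousWithinAt
  -- monotonicity dichotomy, matching for S and R
  have hmatch : ∀ j, (StrictMonoOn S (Set.Icc (c j) (d j)) ∧
        StrictMonoOn R (Set.Icc (c j) (d j))) ∨
      (StrictAntiOn S (Set.Icc (c j) (d j)) ∧ StrictAntiOn R (Set.Icc (c j) (d j))) := by
    intro j
    have hdichS := ContinuousOn.strictMonoOn_of_injOn_Icc' (hcd' j) (hcontS j) (hinjS j)
    have hdichR := ContinuousOn.strictMonoOn_of_injOn_Icc' (hcd' j) (hcontR j) (hinjR j)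
    have hcj : c j ∈ Set.Icc (c j) (d j) := Set.left_mem_Icc.2 (hcd' j)
    have hsj := hsign (c j) (hmemU j hcj)
    rcases hdichS with hS1 | hS1 <;> rcases hdichR with hR1 | hR1
    · exact Or.inl ⟨hS1, hR1⟩
    · exfalso
      have h1 : 0 ≤ S' (c j) :=
        CantorConj.deriv_nonneg_of_strictMonoOn (hcd j) (hSd j (c j) hcj) hS1
      have h2 : R' (c j) ≤ 0 :=
        CantorConj.deriv_nonpos_of_strictAntiOn (hcd j) (hRd j (c j) hcj) hR1
      nlinarith
    · exfalso
      have h1 : S' (c j) ≤ 0 :=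
        CantorConj.deriv_nonpos_of_strictAntiOn (hcd j) (hSd j (c j) hcj) hS1
      have h2 : 0 ≤ R' (c j) :=
        CantorConj.deriv_nonneg_of_strictMonoOn (hcd j) (hRd j (c j) hcj) hR1
      nlinarith
    · exact Or.inr ⟨hS1, hR1⟩
  -- branch basics
  have hφSmaps : ∀ i, Set.MapsTo (φS i) (Set.Icc lA lB) (Set.Icc (c i) (d i)) :=
    fun i x hx => (hφS i x hx).1
  have hφRmaps : ∀ i, Set.MapsTo (φR i) (Set.Icc lA lB) (Set.Icc (c i) (d i)) :=
    fun i x hx => (hφR i x hx).1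
  have hSφ : ∀ i, ∀ x ∈ Set.Icc lA lB, S (φS i x) = x := fun i x hx => (hφS i x hx).2
  have hRφ : ∀ i, ∀ x ∈ Set.Icc lA lB, R (φR i x) = x := fun i x hx => (hφR i x hx).2
  have hφST : ∀ i, ∀ x ∈ Set.Icc (c i) (d i), φS i (S x) = x := by
    intro i x hx
    exact hinjS i (hφSmaps i (hSmapsT i hx)) hx (hSφ i (S x) (hSmapsT i hx))
  have hφRT : ∀ i, ∀ x ∈ Set.Icc (c i) (d i), φR i (R x) = x := by
    intro i x hx
    exact hinjR i (hφRmaps i (hRmapsT i hx)) hx (hRφ i (R x) (hRmapsT i hx))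
  -- branches are weak contractions
  have hcontrS : ∀ i, ∀ x ∈ Set.Icc lA lB, ∀ y ∈ Set.Icc lA lB, x ≠ y →
      |φS i x - φS i y| < |x - y| := by
    intro i x hx y hy hne
    have hφne : φS i x ≠ φS i y := by
      intro h
      exact hne (by rw [← hSφ i x hx, ← hSφ i y hy, h])
    have := hexpS i (φS i x) (hφSmaps i hx) (φS i y) (hφSmaps i hy) hφne
    rwa [hSφ i x hx, hSφ i y hy] at this
  have hcontrR : ∀ i, ∀ x ∈ Set.Icc lA lB, ∀ y ∈ Set.Icc lA lB, x ≠ y →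
      |φR i x - φR i y| < |x - y| := by
    intro i x hx y hy hne
    have hφne : φR i x ≠ φR i y := by
      intro h
      exact hne (by rw [← hRφ i x hx, ← hRφ i y hy, h])
    have := hexpR i (φR i x) (hφRmaps i hx) (φR i y) (hφRmaps i hy) hφne
    rwa [hRφ i x hx, hRφ i y hy] at this
  -- branch monotonicity
  have hmonoφS : ∀ i, StrictMonoOn (φS i) (Set.Icc lA lB) ∨
      StrictAntiOn (φS i) (Set.Icc lA lB) := by
    intro i
    rcases hmatch i with ⟨h1, _⟩ | ⟨h1, _⟩
    · exact Or.inl (CantorConj.branch_strictMonoOn (hφSmaps i) (hSφ i) h1)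
    · exact Or.inr (CantorConj.branch_strictAntiOn (hφSmaps i) (hSφ i) h1)
  have hmonoφR : ∀ i, StrictMonoOn (φR i) (Set.Icc lA lB) ∨
      StrictAntiOn (φR i) (Set.Icc lA lB) := by
    intro i
    rcases hmatch i with ⟨_, h1⟩ | ⟨_, h1⟩
    · exact Or.inl (CantorConj.branch_strictMonoOn (hφRmaps i) (hRφ i) h1)
    · exact Or.inr (CantorConj.branch_strictAntiOn (hφRmaps i) (hRφ i) h1)
  -- cross orientation hypotheses
  have hcrossSR : ∀ j, (StrictMonoOn S (Set.Icc (c j) (d j)) ∧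
        StrictMonoOn (φR j) (Set.Icc lA lB)) ∨
      (StrictAntiOn S (Set.Icc (c j) (d j)) ∧ StrictAntiOn (φR j) (Set.Icc lA lB)) := by
    intro j
    rcases hmatch j with ⟨h1, h2⟩ | ⟨h1, h2⟩
    · exact Or.inl ⟨h1, CantorConj.branch_strictMonoOn (hφRmaps j) (hRφ j) h2⟩
    · exact Or.inr ⟨h1, CantorConj.branch_strictAntiOn (hφRmaps j) (hRφ j) h2⟩
  have hcrossRS : ∀ j, (StrictMonoOn R (Set.Icc (c j) (d j)) ∧
        StrictMonoOn (φS j) (Set.Icc lA lB)) ∨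
      (StrictAntiOn R (Set.Icc (c j) (d j)) ∧ StrictAntiOn (φS j) (Set.Icc lA lB)) := by
    intro j
    rcases hmatch j with ⟨h1, h2⟩ | ⟨h1, h2⟩
    · exact Or.inl ⟨h2, CantorConj.branch_strictMonoOn (hφSmaps j) (hSφ j) h1⟩
    · exact Or.inr ⟨h2, CantorConj.branch_strictAntiOn (hφSmaps j) (hSφ j) h1⟩
  -- diameter control
  have hdiamS : ∀ {ε : ℝ}, 0 < ε → ∃ m : ℕ, ∀ w : List (Fin k), w.length = m →
      ∀ x ∈ compBranch φS w '' Set.Icc lA lB, ∀ y ∈ compBranch φS w '' Set.Icc lA lB,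
        |x - y| ≤ ε :=
    fun {ε} hε => CantorConj.diam_block hk0 hAB hφSmaps hsub hcontrS hmonoφS hε
  have hdiamR : ∀ {ε : ℝ}, 0 < ε → ∃ m : ℕ, ∀ w : List (Fin k), w.length = m →
      ∀ x ∈ compBranch φR w '' Set.Icc lA lB, ∀ y ∈ compBranch φR w '' Set.Icc lA lB,
        |x - y| ≤ ε :=
    fun {ε} hε => CantorConj.diam_block hk0 hAB hφRmaps hsub hcontrR hmonoφR hε
  have hblSsub : ∀ w : List (Fin k), compBranch φS w '' Set.Icc lA lB ⊆ Set.Icc lA lB :=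
    CantorConj.compBranch_image_subset hφSmaps hsub
  have hblRsub : ∀ w : List (Fin k), compBranch φR w '' Set.Icc lA lB ⊆ Set.Icc lA lB :=
    CantorConj.compBranch_image_subset hφRmaps hsub
  -- the approximating sequences
  set Ψ : ℕ → ℝ → ℝ := CantorConj.PsiAux c d S φR with hΨdef
  set X : ℕ → ℝ → ℝ := CantorConj.PsiAux c d R φS with hXdef
  have hΨblock : ∀ (w : List (Fin k)) (m : ℕ), w.length ≤ m →
      ∀ x ∈ compBranch φS w '' Set.Icc lA lB,
        Ψ m x ∈ compBranch φR w '' Set.Icc lA lB :=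
    fun w m hm => CantorConj.psiAux_mem_block hu hφSmaps hφRmaps hsub hSmapsT hSφ w m hm
  have hXblock : ∀ (w : List (Fin k)) (m : ℕ), w.length ≤ m →
      ∀ y ∈ compBranch φR w '' Set.Icc lA lB,
        X m y ∈ compBranch φS w '' Set.Icc lA lB :=
    fun w m hm => CantorConj.psiAux_mem_block hu hφRmaps hφSmaps hsub hRmapsT hRφ w m hm
  have hΨstab : ∀ (m : ℕ) (x : ℝ), x ∈ Set.Icc lA lB →
      (∀ w : List (Fin k), w.length = m → x ∉ compBranch φS w '' Set.Icc lA lB) →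
      ∀ m' : ℕ, m ≤ m' → Ψ m' x = Ψ m x :=
    CantorConj.psiAux_stab hu hφST hSmapsT
  have hXstab : ∀ (m : ℕ) (y : ℝ), y ∈ Set.Icc lA lB →
      (∀ w : List (Fin k), w.length = m → y ∉ compBranch φR w '' Set.Icc lA lB) →
      ∀ m' : ℕ, m ≤ m' → X m' y = X m y :=
    CantorConj.psiAux_stab hu hφRT hRmapsT
  have hΨinvX : ∀ (m : ℕ), ∀ y ∈ Set.Icc lA lB, Ψ m (X m y) = y :=
    CantorConj.psiAux_inverse hu hφRmaps hφSmaps hsub hRmapsT hSmapsT hφRT hSφ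
  have hXinvΨ : ∀ (m : ℕ), ∀ x ∈ Set.Icc lA lB, X m (Ψ m x) = x :=
    CantorConj.psiAux_inverse hu hφSmaps hφRmaps hsub hSmapsT hRmapsT hφST hRφ
  have hΨmaps : ∀ m, Set.MapsTo (Ψ m) (Set.Icc lA lB) (Set.Icc lA lB) :=
    CantorConj.psiAux_mapsTo hφRmaps hsub hSmapsT
  have hXmaps : ∀ m, Set.MapsTo (X m) (Set.Icc lA lB) (Set.Icc lA lB) :=
    CantorConj.psiAux_mapsTo hφSmaps hsub hRmapsT
  have hΨmono : ∀ m, StrictMonoOn (Ψ m) (Set.Icc lA lB) :=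
    CantorConj.psiAux_strictMono hu hcd' hdisj hφRmaps hsub hSmapsT hcrossSR
  -- Cauchy property and limits
  have hcauchy : ∀ (Φ : ℕ → ℝ → ℝ),
      (∀ (w : List (Fin k)) (m : ℕ), w.length ≤ m →
        ∀ x ∈ compBranch φS w '' Set.Icc lA lB,
          Φ m x ∈ compBranch φR w '' Set.Icc lA lB) →
      (∀ (m : ℕ) (x : ℝ), x ∈ Set.Icc lA lB →
        (∀ w : List (Fin k), w.length = m → x ∉ compBranch φS w '' Set.Icc lA lB) →
        ∀ m' : ℕ, m ≤ m' → Φ m' x = Φ m x) →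
      ∀ x ∈ Set.Icc lA lB, CauchySeq (fun m => Φ m x) := by
    intro Φ hblock hstab x hxL
    rw [Metric.cauchySeq_iff']
    intro ε hε
    obtain ⟨m, hm⟩ := hdiamR (half_pos hε)
    by_cases hbl : ∃ w : List (Fin k), w.length = m ∧ x ∈ compBranch φS w '' Set.Icc lA lB
    · obtain ⟨w, hw, hxw⟩ := hbl
      refine ⟨m, fun n hn => ?_⟩
      have h1 := hblock w n (hw ▸ hn) x hxw
      have h2 := hblock w m (hw ▸ le_refl m) x hxw
      rw [Real.dist_eq]
      exact lt_of_le_of_lt (hm w hw _ h1 _ h2) (half_lt_self hε)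
    · push_neg at hbl
      refine ⟨m, fun n hn => ?_⟩
      rw [hstab m x hxL hbl n hn, dist_self]
      exact hε
  -- the conjugacy and its inverse
  set ψ : ℝ → ℝ := fun x => limUnder Filter.atTop (fun m => Ψ m x) with hψdef
  set ψ' : ℝ → ℝ := fun y => limUnder Filter.atTop (fun m => X m y) with hψ'def
  have htendΨ : ∀ x ∈ Set.Icc lA lB,
      Filter.Tendsto (fun m => Ψ m x) Filter.atTop (nhds (ψ x)) := by
    intro x hx
    rw [hψdef]
    exact (hcauchy Ψ hΨblock hΨstab x hx).tendsto_limUnder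
  have hcauchyX : ∀ y ∈ Set.Icc lA lB, CauchySeq (fun m => X m y) := by
    intro y hyL
    rw [Metric.cauchySeq_iff']
    intro ε hε
    obtain ⟨m, hm⟩ := hdiamS (half_pos hε)
    by_cases hbl : ∃ w : List (Fin k), w.length = m ∧ y ∈ compBranch φR w '' Set.Icc lA lB
    · obtain ⟨w, hw, hyw⟩ := hbl
      refine ⟨m, fun n hn => ?_⟩
      have h1 := hXblock w n (hw ▸ hn) y hyw
      have h2 := hXblock w m (hw ▸ le_refl m) y hyw
      rw [Real.dist_eq]
      exact lt_of_le_of_lt (hm w hw _ h1 _ h2) (half_lt_self hε)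
    · push_neg at hbl
      refine ⟨m, fun n hn => ?_⟩
      rw [hXstab m y hyL hbl n hn, dist_self]
      exact hε
  have htendX : ∀ y ∈ Set.Icc lA lB,
      Filter.Tendsto (fun m => X m y) Filter.atTop (nhds (ψ' y)) := by
    intro y hy
    rw [hψ'def]
    exact (hcauchyX y hy).tendsto_limUnder
  -- limits respect blocks
  have hψblock : ∀ (w : List (Fin k)), ∀ x ∈ compBranch φS w '' Set.Icc lA lB,
      ψ x ∈ compBranch φR w '' Set.Icc lA lB := by
    intro w x hxw
    have hxL : x ∈ Set.Icc lA lB := hblSsub w hxw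
    obtain ⟨a, b, hab⟩ := CantorConj.block_isIcc hk0 hAB hφRmaps hsub hcontrR hmonoφR w
    have hcl : IsClosed (compBranch φR w '' Set.Icc lA lB) := hab ▸ isClosed_Icc
    refine hcl.mem_of_tendsto (htendΨ x hxL) ?_
    rw [Filter.eventually_atTop]
    exact ⟨w.length, fun n hn => hΨblock w n hn x hxw⟩
  have hψ'block : ∀ (w : List (Fin k)), ∀ y ∈ compBranch φR w '' Set.Icc lA lB,
      ψ' y ∈ compBranch φS w '' Set.Icc lA lB := by
    intro w y hyw
    have hyL : y ∈ Set.Icc lA lB := hblRsub w hyw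
    obtain ⟨a, b, hab⟩ := CantorConj.block_isIcc hk0 hAB hφSmaps hsub hcontrS hmonoφS w
    have hcl : IsClosed (compBranch φS w '' Set.Icc lA lB) := hab ▸ isClosed_Icc
    refine hcl.mem_of_tendsto (htendX y hyL) ?_
    rw [Filter.eventually_atTop]
    exact ⟨w.length, fun n hn => hXblock w n hn y hyw⟩
  have hblS_nil : compBranch φS ([] : List (Fin k)) '' Set.Icc lA lB = Set.Icc lA lB := by
    simp [compBranch]
  have hblR_nil : compBranch φR ([] : List (Fin k)) '' Set.Icc lA lB = Set.Icc lA lB := by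
    simp [compBranch]
  have hψmaps : Set.MapsTo ψ (Set.Icc lA lB) (Set.Icc lA lB) := by
    intro x hx
    have := hψblock [] x (by rwa [hblS_nil])
    rwa [hblR_nil] at this
  have hψ'maps : Set.MapsTo ψ' (Set.Icc lA lB) (Set.Icc lA lB) := by
    intro y hy
    have := hψ'block [] y (by rwa [hblR_nil])
    rwa [hblS_nil] at this
  -- limit of an eventually-stabilised sequence
  have hψeq : ∀ (m : ℕ) (x : ℝ), x ∈ Set.Icc lA lB →
      (∀ n, m ≤ n → Ψ n x = Ψ m x) → ψ x = Ψ m x := by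
    intro m x hxL hst
    refine tendsto_nhds_unique (htendΨ x hxL) ?_
    refine Filter.Tendsto.congr' ?_ tendsto_const_nhds
    rw [Filter.EventuallyEq, Filter.eventually_atTop]
    exact ⟨m, fun n hn => (hst n hn).symm⟩
  have hψ'eq : ∀ (m : ℕ) (y : ℝ), y ∈ Set.Icc lA lB →
      (∀ n, m ≤ n → X n y = X m y) → ψ' y = X m y := by
    intro m y hyL hst
    refine tendsto_nhds_unique (htendX y hyL) ?_
    refine Filter.Tendsto.congr' ?_ tendsto_const_nhds
    rw [Filter.EventuallyEq, Filter.eventually_atTop]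
    exact ⟨m, fun n hn => (hst n hn).symm⟩
  -- ψ ∘ ψ' = id on L
  have hinv : ∀ y ∈ Set.Icc lA lB, ψ (ψ' y) = y := by
    intro y hyL
    by_cases hy : ∀ m : ℕ, ∃ w : List (Fin k), w.length = m ∧
        y ∈ compBranch φR w '' Set.Icc lA lB
    · apply eq_of_forall_dist_le
      intro ε hε
      obtain ⟨m, hm⟩ := hdiamR hε
      obtain ⟨w, hw, hyw⟩ := hy m
      have h1 : ψ' y ∈ compBranch φS w '' Set.Icc lA lB := hψ'block w y hyw
      have h2 : ψ (ψ' y) ∈ compBranch φR w '' Set.Icc lA lB := hψblock w _ h1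
      rw [Real.dist_eq]
      exact hm w hw _ h2 _ hyw
    · push_neg at hy
      obtain ⟨m, hm⟩ := hy
      have hstX : ∀ n, m ≤ n → X n y = X m y := fun n hn => hXstab m y hyL hm n hn
      have hψ'y : ψ' y = X m y := hψ'eq m y hyL hstX
      set x := X m y with hxdef
      have hxL : x ∈ Set.Icc lA lB := hXmaps m hyL
      have hΨx : Ψ m x = y := hΨinvX m y hyL
      have hxnb : ∀ w : List (Fin k), w.length = m →
          x ∉ compBranch φS w '' Set.Icc lA lB := by
        intro w hw hxw
        have := hΨblock w m hw.le x hxw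
        rw [hΨx] at this
        exact hm w hw this
      have hstΨ : ∀ n, m ≤ n → Ψ n x = Ψ m x := fun n hn => hΨstab m x hxL hxnb n hn
      rw [hψ'y, hψeq m x hxL hstΨ, hΨx]
  have hinv' : ∀ x ∈ Set.Icc lA lB, ψ' (ψ x) = x := by
    intro x hxL
    by_cases hx : ∀ m : ℕ, ∃ w : List (Fin k), w.length = m ∧
        x ∈ compBranch φS w '' Set.Icc lA lB
    · apply eq_of_forall_dist_le
      intro ε hε
      obtain ⟨m, hm⟩ := hdiamS hε
      obtain ⟨w, hw, hxw⟩ := hx m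
      have h1 : ψ x ∈ compBranch φR w '' Set.Icc lA lB := hψblock w x hxw
      have h2 : ψ' (ψ x) ∈ compBranch φS w '' Set.Icc lA lB := hψ'block w _ h1
      rw [Real.dist_eq]
      exact hm w hw _ h2 _ hxw
    · push_neg at hx
      obtain ⟨m, hm⟩ := hx
      have hstΨ : ∀ n, m ≤ n → Ψ n x = Ψ m x := fun n hn => hΨstab m x hxL hm n hn
      have hψx : ψ x = Ψ m x := hψeq m x hxL hstΨ
      set y := Ψ m x with hydef
      have hyL : y ∈ Set.Icc lA lB := hΨmaps m hxL
      have hXy : X m y = x := hXinvΨ m x hxL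
      have hynb : ∀ w : List (Fin k), w.length = m →
          y ∉ compBranch φR w '' Set.Icc lA lB := by
        intro w hw hyw
        have := hXblock w m hw.le y hyw
        rw [hXy] at this
        exact hm w hw this
      have hstX : ∀ n, m ≤ n → X n y = X m y := fun n hn => hXstab m y hyL hynb n hn
      rw [hψx, hψ'eq m y hyL hstX, hXy]
  -- block images
  have hblockimg : ∀ w : List (Fin k),
      ψ '' (compBranch φS w '' Set.Icc lA lB) = compBranch φR w '' Set.Icc lA lB := by
    intro w
    apply Set.Subset.antisymm
    · rintro _ ⟨x, hx, rfl⟩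
      exact hψblock w x hx
    · intro y hy
      have hyL : y ∈ Set.Icc lA lB := hblRsub w hy
      exact ⟨ψ' y, hψ'block w y hy, hinv y hyL⟩
  -- bijectivity
  have hψinj : Set.InjOn ψ (Set.Icc lA lB) := by
    intro x hx y hy heq
    rw [← hinv' x hx, ← hinv' y hy, heq]
  have hψsurj : Set.SurjOn ψ (Set.Icc lA lB) (Set.Icc lA lB) := by
    intro y hy
    exact ⟨ψ' y, hψ'maps hy, hinv y hy⟩
  -- Cantor set image
  have hcantor : ψ '' {x | ∀ n : ℕ, S^[n] x ∈ ⋃ j, Set.Icc (c j) (d j)} =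
      {x | ∀ n : ℕ, R^[n] x ∈ ⋃ j, Set.Icc (c j) (d j)} := by
    have hiffS := fun x => CantorConj.cantor_iff (φ := φS) (T := S) hsub hφSmaps hSφ hφST x
    have hiffR := fun y => CantorConj.cantor_iff (φ := φR) (T := R) hsub hφRmaps hRφ hφRT y
    apply Set.Subset.antisymm
    · rintro _ ⟨x, hxC, rfl⟩
      refine (hiffR (ψ x)).2 ?_
      intro m
      obtain ⟨w, hw, hxw⟩ := (hiffS x).1 hxC m
      exact ⟨w, hw, hψblock w x hxw⟩
    · intro y hyC
      have hby := (hiffR y).1 hyC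
      have hyL : y ∈ Set.Icc lA lB := by
        obtain ⟨w, _, hyw⟩ := hby 0
        exact hblRsub w hyw
      refine ⟨ψ' y, ?_, hinv y hyL⟩
      refine (hiffS (ψ' y)).2 ?_
      intro m
      obtain ⟨w, hw, hyw⟩ := hby m
      exact ⟨w, hw, hψ'block w y hyw⟩
  -- monotonicity of ψ
  have hψmono : StrictMonoOn ψ (Set.Icc lA lB) := by
    intro x hx y hy hxy
    have hle : ψ x ≤ ψ y :=
      le_of_tendsto_of_tendsto' (htendΨ x hx) (htendΨ y hy)
        (fun n => (hΨmono n hx hy hxy).le)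
    rcases lt_or_eq_of_le hle with h | h
    · exact h
    · exact absurd (hψinj hx hy h) hxy.ne
  -- endpoints are fixed
  have hψlB : ψ lB = lB := by
    have h1 : ψ lB ∈ Set.Icc lA lB := hψmaps (Set.right_mem_Icc.2 hAB)
    obtain ⟨x0, hx0, heq⟩ := hψsurj (Set.right_mem_Icc.2 hAB)
    rcases eq_or_lt_of_le hx0.2 with h | h
    · rw [← h] at heq ⊢
      exact heq
    · have := hψmono hx0 (Set.right_mem_Icc.2 hAB) h
      rw [heq] at this
      exact le_antisymm h1.2 this.le
  have hψlA : ψ lA = lA := by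
    have h1 : ψ lA ∈ Set.Icc lA lB := hψmaps (Set.left_mem_Icc.2 hAB)
    obtain ⟨x0, hx0, heq⟩ := hψsurj (Set.left_mem_Icc.2 hAB)
    rcases eq_or_lt_of_le hx0.1 with h | h
    · rw [h] at heq ⊢
      exact heq
    · have := hψmono (Set.left_mem_Icc.2 hAB) hx0 h
      rw [heq] at this
      exact le_antisymm this.le h1.1
  -- continuity
  have hψcont : ContinuousOn ψ (Set.Icc lA lB) := by
    intro a haL
    have hright : ContinuousWithinAt ψ (Set.Icc a lB) a := by
      rcases eq_or_lt_of_le haL.2 with heq | hlt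
      · rw [heq, Set.Icc_self]
        exact continuousWithinAt_singleton
      · have h := StrictMonoOn.continuousWithinAt_right_of_exists_between
          (f := ψ) (s := Set.Icc a lB) (a := a)
          (hψmono.mono (Set.Icc_subset_Icc haL.1 le_rfl))
          (Icc_mem_nhdsGE_of_mem (Set.left_mem_Ico.2 hlt)) ?_
        · exact h.mono (fun z hz => hz.1)
        · intro b hb
          have hψa : ψ a < lB := by
            rw [← hψlB]
            exact hψmono haL (Set.right_mem_Icc.2 hAB) hlt
          set t := min b lB with htdef
          have ht1 : ψ a < t := lt_min hb hψa
          have htL : t ∈ Set.Icc lA lB :=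
            ⟨le_trans (hψmaps haL).1 ht1.le, min_le_right _ _⟩
          obtain ⟨cc, hccL, hcct⟩ := hψsurj htL
          have hcca : a ≤ cc := by
            by_contra hcon
            push_neg at hcon
            have := hψmono hccL haL hcon
            rw [hcct] at this
            exact absurd ht1 (not_lt.2 this.le)
          exact ⟨cc, ⟨hcca, hccL.2⟩, by rw [hcct]; exact ⟨ht1, min_le_left _ _⟩⟩
    have hleft : ContinuousWithinAt ψ (Set.Icc lA a) a := by
      rcases eq_or_lt_of_le haL.1 with heq | hlt
      · rw [← heq, Set.Icc_self]
        exact continuousWithinAt_singleton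
      · have h := StrictMonoOn.continuousWithinAt_left_of_exists_between
          (f := ψ) (s := Set.Icc lA a) (a := a)
          (hψmono.mono (Set.Icc_subset_Icc le_rfl haL.2))
          (Icc_mem_nhdsLE_of_mem (Set.right_mem_Ioc.2 hlt)) ?_
        · exact h.mono (fun z hz => hz.2)
        · intro b hb
          have hψa : lA < ψ a := by
            rw [← hψlA]
            exact hψmono (Set.left_mem_Icc.2 hAB) haL hlt
          set t := max b lA with htdef
          have ht1 : t < ψ a := max_lt hb hψa
          have htL : t ∈ Set.Icc lA lB :=
            ⟨le_max_right _ _, le_trans ht1.le (hψmaps haL).2⟩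
          obtain ⟨cc, hccL, hcct⟩ := hψsurj htL
          have hcca : cc ≤ a := by
            by_contra hcon
            push_neg at hcon
            have := hψmono haL hccL hcon
            rw [hcct] at this
            exact absurd ht1 (not_lt.2 this.le)
          exact ⟨cc, ⟨hccL.1, hcca⟩, by rw [hcct]; exact ⟨le_max_left _ _, ht1⟩⟩
    have hcover : Set.Icc lA lB ⊆ Set.Icc lA a ∪ Set.Icc a lB := by
      intro z hz
      rcases le_total z a with h | h
      · exact Or.inl ⟨hz.1, h⟩
      · exact Or.inr ⟨h, hz.2⟩
    exact (hleft.union hright).mono hcover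
  exact ⟨ψ, hψcont, ⟨hψmaps, hψinj, hψsurj⟩, hcantor, hblockimg⟩
end

section
/- Bound on gap depth (Lemma 3 analogue): Let β > 1 with |S'| ≥ β, and suppose F : T → L is a C¹ map on an m-block T of C_S with nonlinearity N(F) < 1/2, such that F maps some gap J_i(m+p) ⊆ T of level m+p onto a level-0 gap J_j, and suppose the nonlinearity N(S^m|_T) < 1/2. Then β^p ≤ e·max_r |J_r| / min_r |J_r|; in particular p is bounded by a constant l depending only on β and the lengths |J₁|,…,|J_{k−1}|. -/
/-!
Let `K = e^{1/2}` bound the distortion of both `S^m` and `F` on `T`. Since `S^p` stretches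
`J_i(p)` by at least `β^p` onto `J_i`, the distortion of `S^m` compares the two gaps of `T`:
`β^p |J_i(m+p)| ≤ K |J_i(m)|`. The distortion of `F` then gives
`|J_j| / |F(J_i(m))| ≤ K |J_i(m+p)| / |J_i(m)| ≤ e β^{-p}`, and the bounds
`min_r |J_r| ≤ |J_j|`, `|F(J_i(m))| ≤ max_r |J_r|` finish the proof.
-/

open MeasureTheory Set

theorem le_exp_mul_of_log_div_lt {a b c : ℝ} (hb : 0 < b) (h : Real.log (a / b) < c) :
    a ≤ Real.exp c * b := by
  rcases le_or_gt a 0 with ha | ha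
  · exact ha.trans (by positivity)
  · exact ((div_lt_iff₀ hb).1 ((Real.log_lt_iff_lt_exp (div_pos ha hb)).1 h)).le

theorem pow_le_abs_prod_range {β : ℝ} {f : ℕ → ℝ} {n : ℕ} (hβ : 0 ≤ β)
    (hf : ∀ q < n, β ≤ |f q|) : β ^ n ≤ |∏ q ∈ Finset.range n, f q| := by
  rw [Finset.abs_prod]
  simpa using Finset.prod_le_prod (fun _ _ => hβ) fun q hq => hf q (Finset.mem_range.1 hq)

theorem hasDerivAt_iterate_of_forall_lt_mem {S S' : ℝ → ℝ} {D : Set ℝ}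
    (hS : ∀ x ∈ D, HasDerivAt S (S' x) x) {n : ℕ} {x : ℝ} (hx : ∀ q < n, S^[q] x ∈ D) :
    HasDerivAt S^[n] (∏ q ∈ Finset.range n, S' (S^[q] x)) x := by
  induction n with
  | zero => simpa using hasDerivAt_id x
  | succ n ih =>
    have hcomp :=
      (hS _ (hx n n.lt_succ_self)).comp x (ih fun q hq => hx q (hq.trans n.lt_succ_self))
    rw [← Function.iterate_succ'] at hcomp
    rwa [Finset.prod_range_succ, mul_comm]

section MeanValue

variable {G G' : ℝ → ℝ}

theorem exists_abs_sub_eq_abs_deriv_mul {x y : ℝ}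
    (hG : ∀ z ∈ uIcc x y, HasDerivAt G (G' z) z) :
    ∃ ξ ∈ uIcc x y, |G y - G x| = |G' ξ| * |y - x| := by
  wlog hxy : x < y generalizing x y
  · rcases (not_lt.1 hxy).eq_or_lt with rfl | hyx
    · exact ⟨_, left_mem_uIcc, by simp⟩
    · obtain ⟨ξ, hξ, h⟩ := this (uIcc_comm x y ▸ hG) hyx
      exact ⟨ξ, uIcc_comm x y ▸ hξ, by rwa [abs_sub_comm (G y), abs_sub_comm y]⟩
  rw [uIcc_of_lt hxy] at hG ⊢
  obtain ⟨ξ, hξ, hslope⟩ := exists_hasDerivAt_eq_slope G G' hxy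
    (fun z hz => (hG z hz).continuousAt.continuousWithinAt)
    (fun z hz => hG z (Ioo_subset_Icc_self hz))
  refine ⟨ξ, Ioo_subset_Icc_self hξ, ?_⟩
  rw [hslope, abs_div, div_mul_cancel₀ _ (abs_pos.2 (sub_ne_zero.2 hxy.ne')).ne']

theorem abs_sub_le_volume_image_uIcc {a b : ℝ} (hG : ContinuousOn G (uIcc a b)) :
    |G b - G a| ≤ (volume (G '' uIcc a b)).toReal := by
  have hle : volume (uIcc (G a) (G b)) ≤ volume (G '' uIcc a b) :=
    measure_mono (intermediate_value_uIcc hG)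
  rw [Real.volume_interval] at hle
  simpa using ENNReal.toReal_mono (isCompact_uIcc.image_of_continuousOn hG).measure_lt_top.ne hle

theorem exists_abs_deriv_mul_le_volume_image {a b : ℝ} (hab : a ≤ b)
    (hG : ∀ x ∈ Icc a b, HasDerivAt G (G' x) x) :
    ∃ ξ ∈ Icc a b, |G' ξ| * (b - a) ≤ (volume (G '' Icc a b)).toReal := by
  rw [← uIcc_of_le hab] at hG ⊢
  obtain ⟨ξ, hξ, h⟩ := exists_abs_sub_eq_abs_deriv_mul hG
  refine ⟨ξ, uIcc_of_le hab ▸ hξ, ?_⟩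
  rw [← abs_of_nonneg (sub_nonneg.2 hab), ← h]
  exact abs_sub_le_volume_image_uIcc fun x hx => (hG x hx).continuousAt.continuousWithinAt

theorem mul_sub_le_volume_image_of_le_abs_deriv {a b c : ℝ} (hab : a ≤ b)
    (hG : ∀ x ∈ Icc a b, HasDerivAt G (G' x) x) (hc : ∀ x ∈ Icc a b, c ≤ |G' x|) :
    c * (b - a) ≤ (volume (G '' Icc a b)).toReal := by
  obtain ⟨ξ, hξ, h⟩ := exists_abs_deriv_mul_le_volume_image hab hG
  exact (mul_le_mul_of_nonneg_right (hc ξ hξ) (sub_nonneg.2 hab)).trans h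

theorem exists_sub_le_abs_deriv_mul_of_Icc_subset_image {a b u v : ℝ} (huv : u ≤ v)
    (hG : ∀ x ∈ Icc a b, HasDerivAt G (G' x) x) (himage : Icc u v ⊆ G '' Icc a b) :
    ∃ ξ ∈ Icc a b, v - u ≤ |G' ξ| * (b - a) := by
  obtain ⟨x, hx, rfl⟩ := himage (left_mem_Icc.2 huv)
  obtain ⟨y, hy, rfl⟩ := himage (right_mem_Icc.2 huv)
  have hsub : uIcc x y ⊆ Icc a b := uIcc_subset_Icc hx hy
  obtain ⟨ξ, hξ, h⟩ := exists_abs_sub_eq_abs_deriv_mul fun z hz => hG z (hsub hz)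
  refine ⟨ξ, hsub hξ, ?_⟩
  calc G y - G x ≤ |G y - G x| := le_abs_self _
    _ = |G' ξ| * |y - x| := h
    _ ≤ |G' ξ| * (b - a) := by
      gcongr
      rw [abs_sub_le_iff]
      constructor <;> linarith [hx.1, hx.2, hy.1, hy.2]

theorem sub_mul_sub_le_of_bounded_distortion {s : Set ℝ} {K L a1 a2 b1 b2 u v : ℝ}
    (hG : ∀ x ∈ s, HasDerivAt G (G' x) x)
    (hdist : ∀ x ∈ s, ∀ y ∈ s, |G' x| ≤ K * |G' y|)
    (hK : 0 ≤ K) (ha : a1 ≤ a2) (has : Icc a1 a2 ⊆ s) (hb : b1 ≤ b2) (hbs : Icc b1 b2 ⊆ s)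
    (huv : u ≤ v) (hcover : Icc u v ⊆ G '' Icc a1 a2)
    (hL : (volume (G '' Icc b1 b2)).toReal ≤ L) :
    (v - u) * (b2 - b1) ≤ K * L * (a2 - a1) := by
  obtain ⟨ξa, hξa, hA⟩ :=
    exists_sub_le_abs_deriv_mul_of_Icc_subset_image huv (fun x hx => hG x (has hx)) hcover
  obtain ⟨ξb, hξb, hB⟩ := exists_abs_deriv_mul_le_volume_image hb fun x hx => hG x (hbs hx)
  have hb' : 0 ≤ b2 - b1 := sub_nonneg.2 hb
  have ha' : 0 ≤ a2 - a1 := sub_nonneg.2 ha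
  calc (v - u) * (b2 - b1) ≤ |G' ξa| * (a2 - a1) * (b2 - b1) := by gcongr
    _ ≤ K * |G' ξb| * (a2 - a1) * (b2 - b1) := by gcongr; exact hdist _ (has hξa) _ (hbs hξb)
    _ = K * (a2 - a1) * (|G' ξb| * (b2 - b1)) := by ring
    _ ≤ K * (a2 - a1) * L := by gcongr; exact hB.trans hL
    _ = K * L * (a2 - a1) := by ring

theorem mul_sub_le_of_bounded_distortion {s : Set ℝ} {K L a1 a2 b1 b2 u v c : ℝ}
    (hG : ∀ x ∈ s, HasDerivAt G (G' x) x)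
    (hdist : ∀ x ∈ s, ∀ y ∈ s, |G' x| ≤ K * |G' y|)
    (hK : 0 ≤ K) (ha : a1 ≤ a2) (has : Icc a1 a2 ⊆ s) (hb : b1 ≤ b2) (hbs : Icc b1 b2 ⊆ s)
    (huv : u < v) (hcover : Icc u v ⊆ G '' Icc a1 a2)
    (hL : (volume (G '' Icc b1 b2)).toReal ≤ L) (hc : 0 ≤ c) (hcL : c * L ≤ v - u) :
    c * (b2 - b1) ≤ K * (a2 - a1) := by
  have hratio := sub_mul_sub_le_of_bounded_distortion hG hdist hK ha has hb hbs huv.le hcover hL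
  refine le_of_mul_le_mul_left ?_ (sub_pos.2 huv)
  calc (v - u) * (c * (b2 - b1)) = c * ((v - u) * (b2 - b1)) := by ring
    _ ≤ c * (K * L * (a2 - a1)) := by gcongr
    _ = K * (a2 - a1) * (c * L) := by ring
    _ ≤ K * (a2 - a1) * (v - u) := by gcongr
    _ = (v - u) * (K * (a2 - a1)) := by ring

end MeanValue

theorem gap_depth_bound_general
    (k kg m p : ℕ) (c d : Fin k → ℝ) (u v : Fin kg → ℝ)
    (hne : (Finset.univ : Finset (Fin kg)).Nonempty)
    (hgap : ∀ r, u r < v r)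
    (β t1 t2 a1 a2 b1 b2 w1 w2 : ℝ) (i j : Fin kg)
    (S S' F F' : ℝ → ℝ) (hβ : 1 < β)
    (hS : ∀ x ∈ ⋃ q, Set.Icc (c q) (d q), HasDerivAt S (S' x) x)
    (hexp : ∀ x ∈ ⋃ q, Set.Icc (c q) (d q), β ≤ |S' x|)
    (hTiter : ∀ q < m, S^[q] '' Set.Icc t1 t2 ⊆ ⋃ q, Set.Icc (c q) (d q))
    (hNSm : ∀ x ∈ Set.Icc t1 t2, ∀ y ∈ Set.Icc t1 t2,
      Real.log (|∏ q ∈ Finset.range m, S' (S^[q] x)| /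
        |∏ q ∈ Finset.range m, S' (S^[q] y)|) < 1 / 2)
    (hF : ∀ x ∈ Set.Icc t1 t2, HasDerivAt F (F' x) x)
    (hF0 : ∀ x ∈ Set.Icc t1 t2, F' x ≠ 0)
    (hNF : ∀ x ∈ Set.Icc t1 t2, ∀ y ∈ Set.Icc t1 t2,
      Real.log (|F' x| / |F' y|) < 1 / 2)
    -- the level-`m` gap `J_i(m) = [a1,a2] ⊆ T` with `S^m(J_i(m)) = J_i`
    (ha : a1 < a2) (haT : Set.Icc a1 a2 ⊆ Set.Icc t1 t2)
    (hGm : S^[m] '' Set.Icc a1 a2 = Set.Icc (u i) (v i))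
    -- the level-`m+p` gap `J_i(m+p) = [b1,b2] ⊆ T` with `S^m(J_i(m+p)) = J_i(p) = [w1,w2]`
    (hb : b1 < b2) (hbT : Set.Icc b1 b2 ⊆ Set.Icc t1 t2)
    (hGmp : S^[m] '' Set.Icc b1 b2 = Set.Icc w1 w2)
    (hGpiter : ∀ q < p, S^[q] '' Set.Icc w1 w2 ⊆ ⋃ q, Set.Icc (c q) (d q))
    (hGp : S^[p] '' Set.Icc w1 w2 = Set.Icc (u i) (v i))
    -- `F` maps the deep gap onto the level-0 gap `J_j`
    (hFGmp : F '' Set.Icc b1 b2 = Set.Icc (u j) (v j))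
    -- `F` maps the level-`m` gap onto a complementary component, of length at most `max_r |J_r|`
    (hFGm : (volume (F '' Set.Icc a1 a2)).toReal ≤
      Finset.univ.sup' hne fun r => v r - u r) :
    β ^ p ≤ Real.exp 1 * (Finset.univ.sup' hne fun r => v r - u r) /
      (Finset.univ.inf' hne fun r => v r - u r) := by
  set M := Finset.univ.sup' hne fun r => v r - u r
  set K := Real.exp (1 / 2)
  have hβ0 : 0 ≤ β := by linarith
  have hSm_expand : ∀ x ∈ Icc t1 t2, β ^ m ≤ |∏ q ∈ Finset.range m, S' (S^[q] x)| :=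
    fun x hx => pow_le_abs_prod_range hβ0 fun q hq => hexp _ (hTiter q hq ⟨x, hx, rfl⟩)
  have hSm_dist : ∀ x ∈ Icc t1 t2, ∀ y ∈ Icc t1 t2,
      |∏ q ∈ Finset.range m, S' (S^[q] x)| ≤ K * |∏ q ∈ Finset.range m, S' (S^[q] y)| :=
    fun x hx y hy =>
    le_exp_mul_of_log_div_lt ((pow_pos (by linarith) m).trans_le (hSm_expand y hy)) (hNSm x hx y hy)
  have hF_dist : ∀ x ∈ Icc t1 t2, ∀ y ∈ Icc t1 t2, |F' x| ≤ K * |F' y| := fun x hx y hy =>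
    le_exp_mul_of_log_div_lt (abs_pos.2 (hF0 y hy)) (hNF x hx y hy)
  have hw : w1 ≤ w2 := nonempty_Icc.1 (hGmp ▸ (nonempty_Icc.2 hb.le).image _)
  have hexpand : β ^ p * (w2 - w1) ≤ v i - u i := by
    have := mul_sub_le_volume_image_of_le_abs_deriv hw
      (fun x hx => hasDerivAt_iterate_of_forall_lt_mem hS fun q hq => hGpiter q hq ⟨x, hx, rfl⟩)
      fun x hx => pow_le_abs_prod_range hβ0 fun q hq => hexp _ (hGpiter q hq ⟨x, hx, rfl⟩)
    rwa [hGp, ← measureReal_def, Real.volume_real_Icc_of_le (hgap i).le] at this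
  have hdeep : β ^ p * (b2 - b1) ≤ K * (a2 - a1) :=
    mul_sub_le_of_bounded_distortion (fun x hx =>
      hasDerivAt_iterate_of_forall_lt_mem hS fun q hq => hTiter q hq ⟨x, hx, rfl⟩)
      hSm_dist (Real.exp_nonneg _) ha.le haT hb.le hbT (hgap i) hGm.ge
      (by rw [hGmp, ← measureReal_def, Real.volume_real_Icc_of_le hw])
      (by positivity) hexpand
  have hF_ratio : (v j - u j) * (a2 - a1) ≤ K * M * (b2 - b1) :=
    sub_mul_sub_le_of_bounded_distortion hF hF_dist (Real.exp_nonneg _) hb.le hbT ha.le haT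
      (hgap j).le hFGmp.ge hFGm
  have hM : 0 ≤ M :=
    (sub_nonneg.2 (hgap j).le).trans (Finset.le_sup' (fun r => v r - u r) (Finset.mem_univ j))
  have hJj : β ^ p * (v j - u j) ≤ Real.exp 1 * M := by
    refine le_of_mul_le_mul_left ?_ (sub_pos.2 ha)
    calc (a2 - a1) * (β ^ p * (v j - u j)) = β ^ p * ((v j - u j) * (a2 - a1)) := by ring
      _ ≤ β ^ p * (K * M * (b2 - b1)) := by gcongr
      _ = K * M * (β ^ p * (b2 - b1)) := by ring
      _ ≤ K * M * (K * (a2 - a1)) := by gcongr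
      _ = (a2 - a1) * (Real.exp 1 * M) := by rw [← add_halves (1 : ℝ), Real.exp_add]; ring
  have hμpos : 0 < Finset.univ.inf' hne fun r => v r - u r :=
    (Finset.lt_inf'_iff hne).2 fun r _ => sub_pos.2 (hgap r)
  rw [le_div_iff₀ hμpos]
  exact (mul_le_mul_of_nonneg_left (Finset.inf'_le _ (Finset.mem_univ j)) (by positivity)).trans hJj

/-- Bound on gap depth (Lemma 3 analogue): with `|S'| ≥ β > 1`, if `F` is a `C¹` map on
an `m`-block `T` with nonlinearity `N(F) < 1/2` and `N(S^m|_T) < 1/2`, and `F` maps a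
gap of level `m+p` contained in `T` onto a level-0 gap, while the image under `F` of the
level-`m` gap has length at most the largest level-0 gap, then
`β^p ≤ e * max_r |J_r| / min_r |J_r|`; in particular `p` is bounded. -/
theorem gap_depth_bound
    (k kg m p : ℕ) (c d : Fin k → ℝ) (u v : Fin kg → ℝ)
    (hne : (Finset.univ : Finset (Fin kg)).Nonempty)
    (hgap : ∀ r, u r < v r)
    (β t1 t2 a1 a2 b1 b2 w1 w2 : ℝ) (i j : Fin kg)
    (S S' F F' : ℝ → ℝ) (hβ : 1 < β)
    (hS : ∀ x ∈ ⋃ q, Set.Icc (c q) (d q), HasDerivAt S (S' x) x)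
    (hexp : ∀ x ∈ ⋃ q, Set.Icc (c q) (d q), β ≤ |S' x|)
    (hT : t1 < t2)
    (hTiter : ∀ q < m, S^[q] '' Set.Icc t1 t2 ⊆ ⋃ q, Set.Icc (c q) (d q))
    (hNSm : ∀ x ∈ Set.Icc t1 t2, ∀ y ∈ Set.Icc t1 t2,
      Real.log (|∏ q ∈ Finset.range m, S' (S^[q] x)| /
        |∏ q ∈ Finset.range m, S' (S^[q] y)|) < 1 / 2)
    (hF : ∀ x ∈ Set.Icc t1 t2, HasDerivAt F (F' x) x)
    (hF0 : ∀ x ∈ Set.Icc t1 t2, F' x ≠ 0)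
    (hNF : ∀ x ∈ Set.Icc t1 t2, ∀ y ∈ Set.Icc t1 t2,
      Real.log (|F' x| / |F' y|) < 1 / 2)
    -- the level-`m` gap `J_i(m) = [a1,a2] ⊆ T` with `S^m(J_i(m)) = J_i`
    (ha : a1 < a2) (haT : Set.Icc a1 a2 ⊆ Set.Icc t1 t2)
    (hGm : S^[m] '' Set.Icc a1 a2 = Set.Icc (u i) (v i))
    -- the level-`m+p` gap `J_i(m+p) = [b1,b2] ⊆ T` with `S^m(J_i(m+p)) = J_i(p) = [w1,w2]`
    (hb : b1 < b2) (hbT : Set.Icc b1 b2 ⊆ Set.Icc t1 t2)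
    (hGmp : S^[m] '' Set.Icc b1 b2 = Set.Icc w1 w2)
    (hGpiter : ∀ q < p, S^[q] '' Set.Icc w1 w2 ⊆ ⋃ q, Set.Icc (c q) (d q))
    (hGp : S^[p] '' Set.Icc w1 w2 = Set.Icc (u i) (v i))
    -- `F` maps the deep gap onto the level-0 gap `J_j`
    (hFGmp : F '' Set.Icc b1 b2 = Set.Icc (u j) (v j))
    -- `F` maps the level-`m` gap onto a complementary component, of length at most `max_r |J_r|`
    (hFGm : (volume (F '' Set.Icc a1 a2)).toReal ≤
      Finset.univ.sup' hne fun r => v r - u r) :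
    β ^ p ≤ Real.exp 1 * (Finset.univ.sup' hne fun r => v r - u r) /
      (Finset.univ.inf' hne fun r => v r - u r) :=
  gap_depth_bound_general k kg m p c d u v hne hgap β t1 t2 a1 a2 b1 b2 w1 w2 i j S S' F F' hβ hS
    hexp hTiter hNSm hF hF0 hNF ha haT hGm hb hbT hGmp hGpiter hGp hFGmp hFGm
end

section
/- Hölder C¹-closeness of inverse branches: given M, α > 0 and c > 0 and l ∈ ℕ, there exists ε > 0 such that for every S ∈ 𝒜(M,ε,α) and the affine map R ∈ 𝒮¹(I₁,…,I_k,L) with R'·S' > 0, the gaps satisfy exp(−c)·|J^R_j(i₁,…,i_r)| ≤ |J^S_j(i₁,…,i_r)| ≤ exp(c)·|J^R_j(i₁,…,i_r)| for all r ≤ l and all 1 ≤ j ≤ k−1. -/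
open MeasureTheory

/-!
Since `S` maps `I_j` onto `L`, the mean value theorem makes `|S'|` take values on both sides of
the slope `|L| / |I_j| = |R'|` on `I_j`; a nonlinearity below `ε` then pins `|S'|` to within a
factor `exp ε` of `|R'|` on all of `I_j`. So each inverse branch of `S` rescales Lebesgue measure
by the factor of the corresponding branch of `R` up to `exp (±ε)`, a composition of `r` branches
up to `exp (±rε)`, and `ε = c / (l + 1)` works for all levels `r ≤ l`.
-/

open Set

/-- Both `|f'|` (by the mean value theorem) and, for an affine `f x = a * x + b`, the constant
`|a|` qualify; this lets the same estimates serve the nonlinear map and its affine model. -/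
def HasMeanValueSlopes (f g : ℝ → ℝ) (s : Set ℝ) : Prop :=
  ∀ x ∈ s, ∀ y ∈ s, ∃ ξ ∈ s, |f x - f y| = g ξ * |x - y|

theorem hasMeanValueSlopes_abs_deriv {f f' : ℝ → ℝ} {s : Set ℝ} (hs : s.OrdConnected)
    (hf : ∀ x ∈ s, HasDerivAt f (f' x) x) : HasMeanValueSlopes f (fun x => |f' x|) s := by
  have key : ∀ x ∈ s, ∀ y ∈ s, x < y → ∃ ξ ∈ s, |f x - f y| = |f' ξ| * |x - y| := by
    intro x hx y hy hxy
    have hxys : Icc x y ⊆ s := hs.out hx hy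
    obtain ⟨ξ, hξ, hslope⟩ := exists_hasDerivAt_eq_slope f f' hxy
      (fun z hz => (hf z (hxys hz)).continuousAt.continuousWithinAt)
      (fun z hz => hf z (hxys (Ioo_subset_Icc_self hz)))
    refine ⟨ξ, hxys (Ioo_subset_Icc_self hξ), ?_⟩
    rw [hslope, abs_div, abs_sub_comm x y, abs_sub_comm (f x) (f y),
      div_mul_cancel₀ _ (abs_pos.2 (sub_ne_zero.2 hxy.ne')).ne']
  intro x hx y hy
  rcases lt_trichotomy x y with hxy | rfl | hxy
  · exact key x hx y hy hxy
  · exact ⟨x, hx, by simp⟩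
  · obtain ⟨ξ, hξ, h⟩ := key y hy x hx hxy
    exact ⟨ξ, hξ, by rw [abs_sub_comm, h, abs_sub_comm]⟩

theorem hasMeanValueSlopes_of_eq_mul_add {f : ℝ → ℝ} {s : Set ℝ} {a b : ℝ}
    (hf : ∀ x ∈ s, f x = a * x + b) : HasMeanValueSlopes f (fun _ => |a|) s := by
  intro x hx y hy
  exact ⟨x, hx, by rw [hf x hx, hf y hy, ← abs_mul]; ring_nf⟩

namespace HasMeanValueSlopes

variable {f g : ℝ → ℝ}

theorem abs_sub_bounds {s : Set ℝ} {m K : ℝ} (h : HasMeanValueSlopes f g s)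
    (hg : ∀ x ∈ s, m ≤ g x ∧ g x ≤ K) :
    ∀ x ∈ s, ∀ y ∈ s, m * |x - y| ≤ |f x - f y| ∧ |f x - f y| ≤ K * |x - y| := by
  intro x hx y hy
  obtain ⟨ξ, hξ, h⟩ := h x hx y hy
  rw [h]
  exact ⟨mul_le_mul_of_nonneg_right (hg ξ hξ).1 (abs_nonneg _),
    mul_le_mul_of_nonneg_right (hg ξ hξ).2 (abs_nonneg _)⟩

variable {a b p q : ℝ}

theorem exists_mul_le_of_mapsTo (h : HasMeanValueSlopes f g (Icc a b)) (hab : a ≤ b)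
    (hf : MapsTo f (Icc a b) (Icc p q)) : ∃ ξ ∈ Icc a b, g ξ * (b - a) ≤ q - p := by
  obtain ⟨ξ, hξ, hslope⟩ := h b (right_mem_Icc.2 hab) a (left_mem_Icc.2 hab)
  refine ⟨ξ, hξ, ?_⟩
  have hfa := hf (left_mem_Icc.2 hab)
  have hfb := hf (right_mem_Icc.2 hab)
  rw [← abs_of_nonneg (sub_nonneg.2 hab), ← hslope, abs_sub_le_iff]
  constructor <;> linarith [hfa.1, hfa.2, hfb.1, hfb.2]

theorem exists_le_mul_of_surjOn (h : HasMeanValueSlopes f g (Icc a b))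
    (hg : ∀ x ∈ Icc a b, 0 ≤ g x) (hpq : p ≤ q) (hf : SurjOn f (Icc a b) (Icc p q)) :
    ∃ ξ ∈ Icc a b, q - p ≤ g ξ * (b - a) := by
  obtain ⟨x, hx, hfx⟩ := hf (left_mem_Icc.2 hpq)
  obtain ⟨y, hy, hfy⟩ := hf (right_mem_Icc.2 hpq)
  obtain ⟨ξ, hξ, hslope⟩ := h y hy x hx
  refine ⟨ξ, hξ, ?_⟩
  have hyx : |y - x| ≤ b - a := by
    rw [abs_sub_le_iff]
    constructor <;> linarith [hx.1, hx.2, hy.1, hy.2]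
  calc q - p = |f y - f x| := by rw [hfx, hfy, abs_of_nonneg (sub_nonneg.2 hpq)]
    _ = g ξ * |y - x| := hslope
    _ ≤ g ξ * (b - a) := mul_le_mul_of_nonneg_left hyx (hg ξ hξ)

theorem bounds_of_image_eq (h : HasMeanValueSlopes f g (Icc a b)) (hab : a < b)
    (hg : ∀ x ∈ Icc a b, 0 ≤ g x) (hpq : p ≤ q) (himg : f '' Icc a b = Icc p q) {s ε : ℝ}
    (hs : s * (b - a) = q - p)
    (hosc : ∀ x ∈ Icc a b, ∀ y ∈ Icc a b, g x ≤ Real.exp ε * g y) :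
    ∀ x ∈ Icc a b, Real.exp (-ε) * s ≤ g x ∧ g x ≤ Real.exp ε * s := by
  have hba : 0 < b - a := sub_pos.2 hab
  obtain ⟨ξ, hξ, hξs⟩ := h.exists_mul_le_of_mapsTo hab.le (himg ▸ mapsTo_image f _)
  obtain ⟨η, hη, hηs⟩ := h.exists_le_mul_of_surjOn hg hpq himg.ge
  rw [← hs] at hξs hηs
  have hgξ : g ξ ≤ s := le_of_mul_le_mul_right hξs hba
  have hgη : s ≤ g η := le_of_mul_le_mul_right hηs hba
  intro x hx
  constructor
  · rw [Real.exp_neg, inv_mul_le_iff₀ (Real.exp_pos ε)]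
    exact hgη.trans (hosc η hη x hx)
  · exact (hosc x hx ξ hξ).trans (mul_le_mul_of_nonneg_left hgξ (Real.exp_pos ε).le)

end HasMeanValueSlopes

theorem le_exp_mul_of_log_div_lt_s12 {u v ε : ℝ} (hu : 0 < u) (hv : 0 < v)
    (h : Real.log (u / v) < ε) : u ≤ Real.exp ε * v := by
  rw [Real.log_lt_iff_lt_exp (div_pos hu hv), div_lt_iff₀ hv] at h
  exact h.le

theorem abs_sub_bounds_of_small_nonlinearity {f f' : ℝ → ℝ} {a b p q s ε : ℝ} (hab : a < b)
    (hpq : p ≤ q) (hf : ∀ x ∈ Icc a b, HasDerivAt f (f' x) x)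
    (hf' : ∀ x ∈ Icc a b, f' x ≠ 0)
    (himg : f '' Icc a b = Icc p q) (hs : s * (b - a) = q - p)
    (hN : ∀ x ∈ Icc a b, ∀ y ∈ Icc a b, Real.log (|f' x| / |f' y|) < ε) :
    ∀ x ∈ Icc a b, ∀ y ∈ Icc a b,
      Real.exp (-ε) * s * |x - y| ≤ |f x - f y| ∧
        |f x - f y| ≤ Real.exp ε * s * |x - y| := by
  have hmv := hasMeanValueSlopes_abs_deriv ordConnected_Icc hf
  refine hmv.abs_sub_bounds (hmv.bounds_of_image_eq hab (fun _ _ => abs_nonneg _) hpq himg hs ?_)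
  intro x hx y hy
  exact le_exp_mul_of_log_div_lt_s12 (abs_pos.2 (hf' x hx)) (abs_pos.2 (hf' y hy)) (hN x hx y hy)

theorem volume_image_le_of_abs_sub_le {f : ℝ → ℝ} {s : Set ℝ} {K : ℝ}
    (hf : ∀ x ∈ s, ∀ y ∈ s, |f x - f y| ≤ K * |x - y|) :
    volume (f '' s) ≤ ENNReal.ofReal K * volume s := by
  have hlip : LipschitzOnWith K.toNNReal f s := LipschitzOnWith.of_dist_le' hf
  simpa [← hausdorffMeasure_real, ENNReal.ofReal] using hlip.hausdorffMeasure_image_le zero_le_one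

theorem measureReal_image_le_of_abs_sub_le {f : ℝ → ℝ} {s : Set ℝ} {K : ℝ} (hK : 0 ≤ K)
    (hs : volume s ≠ ⊤) (hf : ∀ x ∈ s, ∀ y ∈ s, |f x - f y| ≤ K * |x - y|) :
    volume.real (f '' s) ≤ K * volume.real s := by
  have h := ENNReal.toReal_mono (ENNReal.mul_ne_top ENNReal.ofReal_ne_top hs)
    (volume_image_le_of_abs_sub_le hf)
  rwa [ENNReal.toReal_mul, ENNReal.toReal_ofReal hK] at h

theorem measureReal_image_bounds_of_leftInvOn {f g : ℝ → ℝ} {I L A : Set ℝ} {m K : ℝ}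
    (hm : 0 < m) (hK : 0 ≤ K)
    (hf : ∀ x ∈ I, ∀ y ∈ I, m * |x - y| ≤ |f x - f y| ∧ |f x - f y| ≤ K * |x - y|)
    (hg : MapsTo g L I) (hfg : LeftInvOn f g L) (hAL : A ⊆ L) (hA : volume A ≠ ⊤) :
    m * volume.real (g '' A) ≤ volume.real A ∧ volume.real A ≤ K * volume.real (g '' A) := by
  have hgA : MapsTo g A I := hg.mono_left hAL
  have hg_lip : ∀ x ∈ A, ∀ y ∈ A, |g x - g y| ≤ m⁻¹ * |x - y| := by
    intro x hx y hy
    have h := (hf _ (hgA hx) _ (hgA hy)).1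
    rwa [hfg (hAL hx), hfg (hAL hy), ← le_inv_mul_iff₀ hm] at h
  have hgA_fin : volume (g '' A) ≠ ⊤ :=
    ne_top_of_le_ne_top (ENNReal.mul_ne_top ENNReal.ofReal_ne_top hA)
      (volume_image_le_of_abs_sub_le hg_lip)
  constructor
  · exact (le_inv_mul_iff₀ hm).1 <|
      measureReal_image_le_of_abs_sub_le (inv_nonneg.2 hm.le) hA hg_lip
  · calc volume.real A = volume.real (f '' (g '' A)) := by rw [hfg.image_image' hAL]
      _ ≤ K * volume.real (g '' A) :=
        measureReal_image_le_of_abs_sub_le hK hgA_fin fun x hx y hy =>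
          (hf x (image_subset_iff.2 hgA hx) y (image_subset_iff.2 hgA hy)).2

section compBranch

variable {k : ℕ} {φ : Fin k → ℝ → ℝ} {L : Set ℝ}

theorem mapsTo_compBranch (hφ : ∀ i, MapsTo (φ i) L L) (w : List (Fin k)) :
    MapsTo (compBranch φ w) L L := by
  induction w with
  | nil => exact mapsTo_id L
  | cons i w ih => exact (hφ i).comp ih

theorem measureReal_image_compBranch_bounds {m K : Fin k → ℝ} (hm : ∀ i, 0 ≤ m i)
    (hK : ∀ i, 0 ≤ K i) (hφ : ∀ i, MapsTo (φ i) L L)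
    (hbd : ∀ i, ∀ A ⊆ L, m i * volume.real (φ i '' A) ≤ volume.real A ∧
      volume.real A ≤ K i * volume.real (φ i '' A))
    (w : List (Fin k)) {A : Set ℝ} (hAL : A ⊆ L) :
    (w.map m).prod * volume.real (compBranch φ w '' A) ≤ volume.real A ∧
      volume.real A ≤ (w.map K).prod * volume.real (compBranch φ w '' A) := by
  induction w with
  | nil => simp [compBranch]
  | cons i w ih =>
    have hB : compBranch φ w '' A ⊆ L :=
      (mapsTo_compBranch hφ w).image_subset.trans' (image_mono hAL)
    obtain ⟨hlo, hhi⟩ := hbd i _ hB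
    have hmw : 0 ≤ (w.map m).prod := List.prod_nonneg (by simpa using fun j _ => hm j)
    have hKw : 0 ≤ (w.map K).prod := List.prod_nonneg (by simpa using fun j _ => hK j)
    rw [compBranch, image_comp, List.map_cons, List.prod_cons, List.map_cons, List.prod_cons]
    constructor
    · calc m i * (w.map m).prod * volume.real (φ i '' (compBranch φ w '' A))
          = (w.map m).prod * (m i * volume.real (φ i '' (compBranch φ w '' A))) := by ring
        _ ≤ (w.map m).prod * volume.real (compBranch φ w '' A) := by gcongr
        _ ≤ volume.real A := ih.1
    · calc volume.real A ≤ (w.map K).prod * volume.real (compBranch φ w '' A) := ih.2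
        _ ≤ (w.map K).prod * (K i * volume.real (φ i '' (compBranch φ w '' A))) := by gcongr
        _ = K i * (w.map K).prod * volume.real (φ i '' (compBranch φ w '' A)) := by ring

end compBranch

theorem measureReal_image_compBranch_bounds_of_leftInvOn {k : ℕ} {f : ℝ → ℝ}
    {φ : Fin k → ℝ → ℝ} {I : Fin k → Set ℝ} {L : Set ℝ} {m K : Fin k → ℝ}
    (hm : ∀ i, 0 < m i) (hK : ∀ i, 0 ≤ K i) (hL : volume L ≠ ⊤) (hIL : ∀ i, I i ⊆ L)
    (hf : ∀ i, ∀ x ∈ I i, ∀ y ∈ I i,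
      m i * |x - y| ≤ |f x - f y| ∧ |f x - f y| ≤ K i * |x - y|)
    (hφ : ∀ i, MapsTo (φ i) L (I i)) (hfφ : ∀ i, LeftInvOn f (φ i) L)
    (w : List (Fin k)) {A : Set ℝ} (hAL : A ⊆ L) :
    (w.map m).prod * volume.real (compBranch φ w '' A) ≤ volume.real A ∧
      volume.real A ≤ (w.map K).prod * volume.real (compBranch φ w '' A) :=
  measureReal_image_compBranch_bounds (fun i => (hm i).le) hK (fun i => (hφ i).mono_right (hIL i))
    (fun i _ hB => measureReal_image_bounds_of_leftInvOn (hm i) (hK i) (hf i) (hφ i) (hfφ i) hB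
      (ne_top_of_le_ne_top hL (measure_mono hB)))
    w hAL

theorem abs_mul_sub_eq_of_image_Icc_eq {f : ℝ → ℝ} {a b p q s t : ℝ} (hab : a ≤ b)
    (hpq : p ≤ q) (hf : ∀ x ∈ Icc a b, f x = s * x + t) (himg : f '' Icc a b = Icc p q) :
    |s| * (b - a) = q - p := by
  have h := hasMeanValueSlopes_of_eq_mul_add hf
  obtain ⟨_, _, hle⟩ := h.exists_mul_le_of_mapsTo hab (himg ▸ mapsTo_image f _)
  obtain ⟨_, _, hge⟩ := h.exists_le_mul_of_surjOn (fun _ _ => abs_nonneg s) hpq himg.ge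
  exact le_antisymm hle hge

theorem exp_neg_mul_le_and_le_exp_mul {Λ t c x y z : ℝ} (hΛ : 0 < Λ) (hz : 0 ≤ z)
    (htc : t ≤ c) (hlo : Real.exp (-t) * Λ * y ≤ x) (hhi : x ≤ Real.exp t * Λ * y)
    (hx : Λ * z = x) :
    Real.exp (-c) * z ≤ y ∧ y ≤ Real.exp c * z := by
  have hzy : z ≤ Real.exp t * y := le_of_mul_le_mul_left (by linarith) hΛ
  have hyz : Real.exp (-t) * y ≤ z := le_of_mul_le_mul_left (by linarith) hΛ
  have hinv : Real.exp (-t) * Real.exp t = 1 := by rw [← Real.exp_add]; simp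
  constructor
  · calc Real.exp (-c) * z ≤ Real.exp (-t) * z := by gcongr
      _ ≤ Real.exp (-t) * (Real.exp t * y) := by gcongr
      _ = y := by rw [← mul_assoc, hinv, one_mul]
  · calc y = Real.exp t * (Real.exp (-t) * y) := by
          rw [← mul_assoc, mul_comm _ (Real.exp (-t)), hinv, one_mul]
      _ ≤ Real.exp t * z := by gcongr
      _ ≤ Real.exp c * z := by gcongr

theorem holder_c1_closeness_of_gaps_general
    (k : ℕ) (lA lB : ℝ) (hL : lA < lB)
    (c d : Fin k → ℝ) (hcd : ∀ j, c j < d j)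
    (hsub : ∀ j, Set.Icc (c j) (d j) ⊆ Set.Icc lA lB)
    (M α cc : ℝ) (hcc : 0 < cc) (l : ℕ)
    (R : ℝ → ℝ) (slope inter : Fin k → ℝ)
    (haff : ∀ j : Fin k, ∀ x ∈ Set.Icc (c j) (d j), R x = slope j * x + inter j)
    (hRsurj : ∀ j, R '' Set.Icc (c j) (d j) = Set.Icc lA lB)
    (φR : Fin k → ℝ → ℝ)
    (hφR : ∀ i, ∀ x ∈ Set.Icc lA lB, φR i x ∈ Set.Icc (c i) (d i) ∧ R (φR i x) = x) :
    ∃ ε > 0, ∀ S S' : ℝ → ℝ, ∀ φS : Fin k → ℝ → ℝ,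
      (∀ x ∈ ⋃ j, Set.Icc (c j) (d j), HasDerivAt S (S' x) x) →
      (∀ x ∈ ⋃ j, Set.Icc (c j) (d j), 1 < |S' x|) →
      (∀ j, S '' Set.Icc (c j) (d j) = Set.Icc lA lB) →
      -- nonlinearity `N(S) < ε`
      (∀ j : Fin k, ∀ x ∈ Set.Icc (c j) (d j), ∀ y ∈ Set.Icc (c j) (d j),
        Real.log (|S' x| / |S' y|) < ε) →
      -- Hölder control of `log |S'|` with constant `M` and exponent `α`
      (∀ j : Fin k, ∀ x ∈ Set.Icc (c j) (d j), ∀ y ∈ Set.Icc (c j) (d j),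
        abs (Real.log |S' x| - Real.log |S' y|) ≤ M * |x - y| ^ α) →
      -- `R'(x) S'(x) > 0` on `∪ I_j`
      (∀ j : Fin k, ∀ x ∈ Set.Icc (c j) (d j), 0 < slope j * S' x) →
      (∀ i, ∀ x ∈ Set.Icc lA lB, φS i x ∈ Set.Icc (c i) (d i) ∧ S (φS i x) = x) →
      ∀ (j : ℕ) (hj : j + 1 < k), ∀ w : List (Fin k), w.length ≤ l →
        Real.exp (-cc) * (volume (compBranch φR w ''
            Set.Icc (d ⟨j, Nat.lt_of_succ_lt hj⟩) (c ⟨j + 1, hj⟩))).toReal ≤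
          (volume (compBranch φS w ''
            Set.Icc (d ⟨j, Nat.lt_of_succ_lt hj⟩) (c ⟨j + 1, hj⟩))).toReal ∧
        (volume (compBranch φS w ''
            Set.Icc (d ⟨j, Nat.lt_of_succ_lt hj⟩) (c ⟨j + 1, hj⟩))).toReal ≤
          Real.exp cc * (volume (compBranch φR w ''
            Set.Icc (d ⟨j, Nat.lt_of_succ_lt hj⟩) (c ⟨j + 1, hj⟩))).toReal := by
  refine ⟨cc / (l + 1), by positivity, ?_⟩
  intro S S' φS hS' hS'_gt hSimg hN _ _ hφS j hj w hw
  set ε := cc / (l + 1)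
  have hslope i : |slope i| * (d i - c i) = lB - lA :=
    abs_mul_sub_eq_of_image_Icc_eq (hcd i).le hL.le (haff i) (hRsurj i)
  have hslope_pos i : 0 < |slope i| :=
    pos_of_mul_pos_left (by linarith [hslope i]) (sub_pos.2 (hcd i)).le
  have hS_bounds i := abs_sub_bounds_of_small_nonlinearity (hcd i) hL.le
    (fun x hx => hS' x (mem_iUnion.2 ⟨i, hx⟩))
    (fun x hx => abs_pos.1 (one_pos.trans (hS'_gt x (mem_iUnion.2 ⟨i, hx⟩))))
    (hSimg i) (hslope i) (hN i)
  have hgap : Icc (d ⟨j, Nat.lt_of_succ_lt hj⟩) (c ⟨j + 1, hj⟩) ⊆ Icc lA lB :=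
    Icc_subset_Icc (hsub _ (right_mem_Icc.2 (hcd _).le)).1 (hsub _ (left_mem_Icc.2 (hcd _).le)).2
  obtain ⟨hSlo, hShi⟩ := measureReal_image_compBranch_bounds_of_leftInvOn
    (m := fun i => Real.exp (-ε) * |slope i|) (K := fun i => Real.exp ε * |slope i|)
    (fun i => by positivity [hslope_pos i]) (fun i => by positivity) measure_Icc_lt_top.ne hsub
    hS_bounds (fun i x hx => (hφS i x hx).1) (fun i x hx => (hφS i x hx).2) w hgap
  obtain ⟨hRlo, hRhi⟩ := measureReal_image_compBranch_bounds_of_leftInvOn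
    (m := fun i => |slope i|) (K := fun i => |slope i|) hslope_pos (fun i => (hslope_pos i).le)
    measure_Icc_lt_top.ne hsub
    (fun i => (hasMeanValueSlopes_of_eq_mul_add (haff i)).abs_sub_bounds
      fun _ _ => ⟨le_rfl, le_rfl⟩)
    (fun i x hx => (hφR i x hx).1) (fun i x hx => (hφR i x hx).2) w hgap
  simp only [List.prod_map_mul, List.map_const', List.prod_replicate, ← Real.exp_nat_mul,
    mul_neg] at hSlo hShi
  have hwε : w.length * ε ≤ cc :=
    calc w.length * ε ≤ (l + 1) * ε := by gcongr; exact_mod_cast hw.trans l.le_succ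
      _ = cc := mul_div_cancel₀ cc (by positivity)
  exact exp_neg_mul_le_and_le_exp_mul (List.prod_pos fun _ h => by
    obtain ⟨i, _, rfl⟩ := List.mem_map.1 h; exact hslope_pos i) measureReal_nonneg hwε
    hSlo hShi (le_antisymm hRhi hRlo).symm

/-- Hölder `C¹`-closeness of gaps (Remark 2): given `M, α, c > 0` and `l ∈ ℕ`, there is
`ε > 0` such that for every `S ∈ 𝒜(M,ε,α)` and the affine `R ∈ 𝒮¹(I₁,…,I_k,L)` with
`R'·S' > 0`, the gaps of level `r ≤ l` satisfy
`exp(-c)·|J^R_j(i₁,…,i_r)| ≤ |J^S_j(i₁,…,i_r)| ≤ exp(c)·|J^R_j(i₁,…,i_r)|`. -/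
theorem holder_c1_closeness_of_gaps
    (k : ℕ) (hk : 2 ≤ k) (lA lB : ℝ) (hL : lA < lB)
    (c d : Fin k → ℝ) (hcd : ∀ j, c j < d j)
    (hsub : ∀ j, Set.Icc (c j) (d j) ⊆ Set.Icc lA lB)
    (horder : ∀ (j : ℕ) (hj : j + 1 < k),
      d ⟨j, Nat.lt_of_succ_lt hj⟩ < c ⟨j + 1, hj⟩)
    (M α cc : ℝ) (hM : 0 < M) (hα : 0 < α) (hcc : 0 < cc) (l : ℕ)
    (R : ℝ → ℝ) (slope inter : Fin k → ℝ)
    (haff : ∀ j : Fin k, ∀ x ∈ Set.Icc (c j) (d j), R x = slope j * x + inter j)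
    (hRsurj : ∀ j, R '' Set.Icc (c j) (d j) = Set.Icc lA lB)
    (φR : Fin k → ℝ → ℝ)
    (hφR : ∀ i, ∀ x ∈ Set.Icc lA lB, φR i x ∈ Set.Icc (c i) (d i) ∧ R (φR i x) = x) :
    ∃ ε > 0, ∀ S S' : ℝ → ℝ, ∀ φS : Fin k → ℝ → ℝ,
      (∀ x ∈ ⋃ j, Set.Icc (c j) (d j), HasDerivAt S (S' x) x) →
      (∀ x ∈ ⋃ j, Set.Icc (c j) (d j), 1 < |S' x|) →
      (∀ j, S '' Set.Icc (c j) (d j) = Set.Icc lA lB) →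
      -- nonlinearity `N(S) < ε`
      (∀ j : Fin k, ∀ x ∈ Set.Icc (c j) (d j), ∀ y ∈ Set.Icc (c j) (d j),
        Real.log (|S' x| / |S' y|) < ε) →
      -- Hölder control of `log |S'|` with constant `M` and exponent `α`
      (∀ j : Fin k, ∀ x ∈ Set.Icc (c j) (d j), ∀ y ∈ Set.Icc (c j) (d j),
        abs (Real.log |S' x| - Real.log |S' y|) ≤ M * |x - y| ^ α) →
      -- `R'(x) S'(x) > 0` on `∪ I_j`
      (∀ j : Fin k, ∀ x ∈ Set.Icc (c j) (d j), 0 < slope j * S' x) →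
      (∀ i, ∀ x ∈ Set.Icc lA lB, φS i x ∈ Set.Icc (c i) (d i) ∧ S (φS i x) = x) →
      ∀ (j : ℕ) (hj : j + 1 < k), ∀ w : List (Fin k), w.length ≤ l →
        Real.exp (-cc) * (volume (compBranch φR w ''
            Set.Icc (d ⟨j, Nat.lt_of_succ_lt hj⟩) (c ⟨j + 1, hj⟩))).toReal ≤
          (volume (compBranch φS w ''
            Set.Icc (d ⟨j, Nat.lt_of_succ_lt hj⟩) (c ⟨j + 1, hj⟩))).toReal ∧
        (volume (compBranch φS w ''
            Set.Icc (d ⟨j, Nat.lt_of_succ_lt hj⟩) (c ⟨j + 1, hj⟩))).toReal ≤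
          Real.exp cc * (volume (compBranch φR w ''
            Set.Icc (d ⟨j, Nat.lt_of_succ_lt hj⟩) (c ⟨j + 1, hj⟩))).toReal :=
  holder_c1_closeness_of_gaps_general k lA lB hL c d hcd hsub M α cc hcc l R slope inter haff hRsurj
    φR hφR
end

section
/- The quantities in inequality chain (9)-(10) of the paper: if N(F) < 1/2 and N(S^m|_T) < 1/2, and F is defined on the m-block T containing gaps J_i(m) and J_i(m+p) with S^m(J_i(m)) = J_i and S^m(J_i(m+p)) = J_i(p), then |F(J_i(m+p))|/|F(J_i(m))| ≤ e · |J_i(p)|/|J_i|. -/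
open MeasureTheory

/-- The chain of estimates (9)-(10): if `N(F) < 1/2` and `N(S^m|_T) < 1/2` on the
`m`-block `T`, and `T` contains gaps `J_i(m) = [a1,a2]` and `J_i(m+p) = [b1,b2]` with
`S^m(J_i(m)) = J_i = [u1,u2]` and `S^m(J_i(m+p)) = J_i(p) = [w1,w2]`, then
`|F(J_i(m+p))| / |F(J_i(m))| ≤ e · |J_i(p)| / |J_i|`. -/
theorem distortion_chain_estimate
    (k m p : ℕ) (c d : Fin k → ℝ)
    (t1 t2 a1 a2 b1 b2 u1 u2 w1 w2 : ℝ)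
    (S S' F F' : ℝ → ℝ) (hT : t1 < t2)
    (hS : ∀ x ∈ ⋃ j, Set.Icc (c j) (d j), HasDerivAt S (S' x) x)
    (hS0 : ∀ x ∈ ⋃ j, Set.Icc (c j) (d j), S' x ≠ 0)
    (hTiter : ∀ q < m, S^[q] '' Set.Icc t1 t2 ⊆ ⋃ j, Set.Icc (c j) (d j))
    (hNSm : ∀ x ∈ Set.Icc t1 t2, ∀ y ∈ Set.Icc t1 t2,
      Real.log (|∏ q ∈ Finset.range m, S' (S^[q] x)| /
        |∏ q ∈ Finset.range m, S' (S^[q] y)|) < 1 / 2)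
    (hF : ∀ x ∈ Set.Icc t1 t2, HasDerivAt F (F' x) x)
    (hF0 : ∀ x ∈ Set.Icc t1 t2, F' x ≠ 0)
    (hNF : ∀ x ∈ Set.Icc t1 t2, ∀ y ∈ Set.Icc t1 t2,
      Real.log (|F' x| / |F' y|) < 1 / 2)
    (ha : a1 < a2) (haT : Set.Icc a1 a2 ⊆ Set.Icc t1 t2)
    (hb : b1 < b2) (hbT : Set.Icc b1 b2 ⊆ Set.Icc t1 t2)
    (hu : u1 < u2) (hw : w1 < w2)
    (hGm : S^[m] '' Set.Icc a1 a2 = Set.Icc u1 u2)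
    (hGmp : S^[m] '' Set.Icc b1 b2 = Set.Icc w1 w2) :
    (volume (F '' Set.Icc b1 b2)).toReal / (volume (F '' Set.Icc a1 a2)).toReal ≤
      Real.exp 1 * ((w2 - w1) / (u2 - u1)) := by
  set G' : ℝ → ℝ := fun x => ∏ q ∈ Finset.range m, S' (S^[q] x) with hG'def
  -- derivative of the iterate
  have hGd : ∀ n ≤ m, ∀ x ∈ Set.Icc t1 t2, HasDerivAt S^[n] (∏ q ∈ Finset.range n, S' (S^[q] x)) x := by
    intro n hn
    induction n with
    | zero => intro x _; simpa using hasDerivAt_id x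
    | succ n ih =>
      intro x hx
      have hn' : n ≤ m := Nat.le_of_succ_le hn
      have hmem : S^[n] x ∈ ⋃ j, Set.Icc (c j) (d j) :=
        hTiter n (lt_of_lt_of_le (Nat.lt_succ_self n) hn) ⟨x, hx, rfl⟩
      have h1 := (hS _ hmem).comp x (ih hn' x hx)
      rw [Function.iterate_succ']
      simpa [Finset.prod_range_succ, mul_comm] using h1
  have hGd' : ∀ x ∈ Set.Icc t1 t2, HasDerivAt S^[m] (G' x) x := hGd m le_rfl
  have hG0 : ∀ x ∈ Set.Icc t1 t2, G' x ≠ 0 := by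
    intro x hx
    refine Finset.prod_ne_zero_iff.mpr ?_
    intro q hq
    exact hS0 _ (hTiter q (Finset.mem_range.mp hq) ⟨x, hx, rfl⟩)
  -- comparison of derivatives
  have key : ∀ H' : ℝ → ℝ, (∀ x ∈ Set.Icc t1 t2, H' x ≠ 0) →
      (∀ x ∈ Set.Icc t1 t2, ∀ y ∈ Set.Icc t1 t2, Real.log (|H' x| / |H' y|) < 1 / 2) →
      ∀ x ∈ Set.Icc t1 t2, ∀ y ∈ Set.Icc t1 t2, |H' x| ≤ Real.exp (1 / 2) * |H' y| := by
    intro H' h0 hN x hx y hy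
    have hy' : 0 < |H' y| := abs_pos.mpr (h0 y hy)
    have hx' : 0 < |H' x| := abs_pos.mpr (h0 x hx)
    have hlt : |H' x| / |H' y| < Real.exp (1 / 2) := by
      calc |H' x| / |H' y| = Real.exp (Real.log (|H' x| / |H' y|)) :=
            (Real.exp_log (div_pos hx' hy')).symm
        _ < Real.exp (1 / 2) := Real.exp_lt_exp.mpr (hN x hx y hy)
    rw [div_lt_iff₀ hy'] at hlt
    linarith
  -- Mean value theorem on [a1, a2] for F
  have hFcont : ∀ (s1 s2 : ℝ), Set.Icc s1 s2 ⊆ Set.Icc t1 t2 → ContinuousOn F (Set.Icc s1 s2) :=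
    fun s1 s2 hsub x hx => ((hF x (hsub hx)).continuousAt).continuousWithinAt
  have hGcont : ∀ (s1 s2 : ℝ), Set.Icc s1 s2 ⊆ Set.Icc t1 t2 → ContinuousOn S^[m] (Set.Icc s1 s2) :=
    fun s1 s2 hsub x hx => ((hGd' x (hsub hx)).continuousAt).continuousWithinAt
  obtain ⟨ξ, hξ, hξeq⟩ := exists_hasDerivAt_eq_slope F F' ha (hFcont a1 a2 haT)
    (fun x hx => hF x (haT (Set.Ioo_subset_Icc_self hx)))
  have hξT : ξ ∈ Set.Icc t1 t2 := haT (Set.Ioo_subset_Icc_self hξ)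
  have hP : 0 < |F' ξ| := abs_pos.mpr (hF0 ξ hξT)
  -- Mean value theorem on [b1, b2] for S^[m]
  obtain ⟨η, hη, hηeq⟩ := exists_hasDerivAt_eq_slope S^[m] G' hb (hGcont b1 b2 hbT)
    (fun x hx => hGd' x (hbT (Set.Ioo_subset_Icc_self hx)))
  have hηT : η ∈ Set.Icc t1 t2 := hbT (Set.Ioo_subset_Icc_self hη)
  have hQ : 0 < |G' η| := abs_pos.mpr (hG0 η hηT)
  have hexp : (0:ℝ) < Real.exp (1/2) := Real.exp_pos _
  -- Lipschitz-type estimate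
  have hlip : ∀ (H H' : ℝ → ℝ) (C s1 s2 : ℝ), Set.Icc s1 s2 ⊆ Set.Icc t1 t2 →
      (∀ x ∈ Set.Icc t1 t2, HasDerivAt H (H' x) x) →
      (∀ x ∈ Set.Icc s1 s2, |H' x| ≤ C) →
      ∀ x ∈ Set.Icc s1 s2, ∀ y ∈ Set.Icc s1 s2, |H y - H x| ≤ C * |y - x| := by
    intro H H' C s1 s2 hsub hH hbound x hx y hy
    have := (convex_Icc s1 s2).norm_image_sub_le_of_norm_hasDerivWithin_le
      (f := H) (f' := H') (fun z hz => (hH z (hsub hz)).hasDerivWithinAt)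
      (fun z hz => by simpa [Real.norm_eq_abs] using hbound z hz) hx hy
    simpa [Real.norm_eq_abs] using this
  -- image of an Icc under F
  have himb := (hFcont b1 b2 hbT).image_Icc hb.le
  have hima := (hFcont a1 a2 haT).image_Icc ha.le
  set MB := sSup (F '' Set.Icc b1 b2)
  set mB := sInf (F '' Set.Icc b1 b2)
  set MA := sSup (F '' Set.Icc a1 a2)
  set mA := sInf (F '' Set.Icc a1 a2)
  have hne : (F '' Set.Icc b1 b2).Nonempty := ⟨F b1, ⟨b1, Set.left_mem_Icc.mpr hb.le, rfl⟩⟩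
  have hmMB : mB ≤ MB := by
    rcases hne with ⟨z, hz⟩
    rw [himb] at hz
    exact le_trans hz.1 hz.2
  have hnea : (F '' Set.Icc a1 a2).Nonempty := ⟨F a1, ⟨a1, Set.left_mem_Icc.mpr ha.le, rfl⟩⟩
  have hmMA : mA ≤ MA := by
    rcases hnea with ⟨z, hz⟩
    rw [hima] at hz
    exact le_trans hz.1 hz.2
  -- volumes
  have hvolb : (volume (F '' Set.Icc b1 b2)).toReal = MB - mB := by
    rw [himb, Real.volume_Icc, ENNReal.toReal_ofReal (by linarith)]
  have hvola : (volume (F '' Set.Icc a1 a2)).toReal = MA - mA := by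
    rw [hima, Real.volume_Icc, ENNReal.toReal_ofReal (by linarith)]
  -- denominator lower bound : MA - mA ≥ |F a2 - F a1| = |F' ξ| * (a2 - a1)
  have hFa1 : F a1 ∈ Set.Icc mA MA := by
    rw [← hima]; exact ⟨a1, Set.left_mem_Icc.mpr ha.le, rfl⟩
  have hFa2 : F a2 ∈ Set.Icc mA MA := by
    rw [← hima]; exact ⟨a2, Set.right_mem_Icc.mpr ha.le, rfl⟩
  have hslopeF : |F a2 - F a1| = |F' ξ| * (a2 - a1) := by
    rw [hξeq, abs_div, abs_of_pos (by linarith : (0:ℝ) < a2 - a1),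
      div_mul_cancel₀ _ (by linarith : a2 - a1 ≠ 0)]
  have hA : |F' ξ| * (a2 - a1) ≤ MA - mA := by
    rw [← hslopeF]
    rcases abs_cases (F a2 - F a1) with ⟨h1, _⟩ | ⟨h1, _⟩ <;>
      · rw [h1]; cases' hFa1 with h2 h3; cases' hFa2 with h4 h5; linarith
  have hApos : 0 < MA - mA := lt_of_lt_of_le (mul_pos hP (by linarith)) hA
  -- numerator upper bound : MB - mB ≤ exp(1/2) * |F' ξ| * (b2 - b1)
  have hMBmem : MB ∈ F '' Set.Icc b1 b2 := by
    rw [himb]; exact Set.right_mem_Icc.mpr hmMB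
  have hmBmem : mB ∈ F '' Set.Icc b1 b2 := by
    rw [himb]; exact Set.left_mem_Icc.mpr hmMB
  obtain ⟨xM, hxM, hxMeq⟩ := hMBmem
  obtain ⟨xm, hxm, hxmeq⟩ := hmBmem
  have hFbound : ∀ x ∈ Set.Icc b1 b2, |F' x| ≤ Real.exp (1/2) * |F' ξ| :=
    fun x hx => key F' hF0 hNF x (hbT hx) ξ hξT
  have hB : MB - mB ≤ Real.exp (1/2) * |F' ξ| * (b2 - b1) := by
    have h1 := hlip F F' (Real.exp (1/2) * |F' ξ|) b1 b2 hbT hF hFbound xm hxm xM hxM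
    have h2 : |xM - xm| ≤ b2 - b1 := by
      cases' hxm with h3 h4; cases' hxM with h5 h6
      rw [abs_le]; constructor <;> linarith
    calc MB - mB = F xM - F xm := by rw [hxMeq, hxmeq]
      _ ≤ |F xM - F xm| := le_abs_self _
      _ ≤ Real.exp (1/2) * |F' ξ| * |xM - xm| := h1
      _ ≤ Real.exp (1/2) * |F' ξ| * (b2 - b1) := by
          exact mul_le_mul_of_nonneg_left h2 (mul_nonneg hexp.le (abs_nonneg _))
  -- w2 - w1 ≥ |G' η| * (b2 - b1)
  have hGb1 : S^[m] b1 ∈ Set.Icc w1 w2 := by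
    rw [← hGmp]; exact ⟨b1, Set.left_mem_Icc.mpr hb.le, rfl⟩
  have hGb2 : S^[m] b2 ∈ Set.Icc w1 w2 := by
    rw [← hGmp]; exact ⟨b2, Set.right_mem_Icc.mpr hb.le, rfl⟩
  have hslopeG : |S^[m] b2 - S^[m] b1| = |G' η| * (b2 - b1) := by
    rw [hηeq, abs_div, abs_of_pos (by linarith : (0:ℝ) < b2 - b1),
      div_mul_cancel₀ _ (by linarith : b2 - b1 ≠ 0)]
  have hW : |G' η| * (b2 - b1) ≤ w2 - w1 := by
    rw [← hslopeG]
    rcases abs_cases (S^[m] b2 - S^[m] b1) with ⟨h1, _⟩ | ⟨h1, _⟩ <;>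
      · rw [h1]; cases' hGb1 with h2 h3; cases' hGb2 with h4 h5; linarith
  -- u2 - u1 ≤ exp(1/2) * |G' η| * (a2 - a1)
  have hu1mem : u1 ∈ S^[m] '' Set.Icc a1 a2 := by
    rw [hGm]; exact Set.left_mem_Icc.mpr hu.le
  have hu2mem : u2 ∈ S^[m] '' Set.Icc a1 a2 := by
    rw [hGm]; exact Set.right_mem_Icc.mpr hu.le
  obtain ⟨y1, hy1, hy1eq⟩ := hu1mem
  obtain ⟨y2, hy2, hy2eq⟩ := hu2mem
  have hGbound : ∀ x ∈ Set.Icc a1 a2, |G' x| ≤ Real.exp (1/2) * |G' η| :=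
    fun x hx => key G' hG0 hNSm x (haT hx) η hηT
  have hU : u2 - u1 ≤ Real.exp (1/2) * |G' η| * (a2 - a1) := by
    have h1 := hlip S^[m] G' (Real.exp (1/2) * |G' η|) a1 a2 haT hGd' hGbound y1 hy1 y2 hy2
    have h2 : |y2 - y1| ≤ a2 - a1 := by
      cases' hy1 with h3 h4; cases' hy2 with h5 h6
      rw [abs_le]; constructor <;> linarith
    calc u2 - u1 = S^[m] y2 - S^[m] y1 := by rw [hy1eq, hy2eq]
      _ ≤ |S^[m] y2 - S^[m] y1| := le_abs_self _
      _ ≤ Real.exp (1/2) * |G' η| * |y2 - y1| := h1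
      _ ≤ Real.exp (1/2) * |G' η| * (a2 - a1) := by
          exact mul_le_mul_of_nonneg_left h2 (mul_nonneg hexp.le (abs_nonneg _))
  -- final arithmetic
  rw [hvolb, hvola, mul_div_assoc' (Real.exp 1),
    div_le_div_iff₀ hApos (by linarith : (0:ℝ) < u2 - u1)]
  have hexp1 : Real.exp 1 = Real.exp (1/2) * Real.exp (1/2) := by
    rw [← Real.exp_add]; norm_num
  have hBnonneg : (0:ℝ) ≤ MB - mB := by linarith
  calc (MB - mB) * (u2 - u1)
      ≤ (Real.exp (1/2) * |F' ξ| * (b2 - b1)) * (Real.exp (1/2) * |G' η| * (a2 - a1)) := by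
        exact mul_le_mul hB hU (by linarith)
          (mul_nonneg (mul_nonneg hexp.le (abs_nonneg _)) (by linarith))
    _ = (Real.exp (1/2) * Real.exp (1/2)) * (|G' η| * (b2 - b1)) * (|F' ξ| * (a2 - a1)) := by
        ring
    _ ≤ (Real.exp (1/2) * Real.exp (1/2)) * (w2 - w1) * (MA - mA) := by
        apply mul_le_mul
        · exact mul_le_mul_of_nonneg_left hW (by positivity)
        · exact hA
        · exact mul_nonneg (abs_nonneg _) (by linarith)
        · exact mul_nonneg (by positivity) (by linarith)
    _ = Real.exp 1 * (w2 - w1) * (MA - mA) := by rw [hexp1]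
end
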